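/- arXiv:2511.12776 — 5 statements merged into one kernel-verified Lean document; each statement's English description precedes it below -/
import Mathlib

section
/- Let Φ : B → ℝ where B ⊆ ℝ^d is a ball centered at the origin, and suppose Φ ∈ C^{0,γ}(B) with Hölder seminorm L, i.e. |Φ(u)−Φ(v)| ≤ L‖u−v‖₂^γ for all u,v ∈ B. Define K(x,y) = Φ(x−y) on a set S with x−y, x−z, z−y, 0 ∈ B for all x,y ∈ S and a fixed z ∈ S. Then the second difference satisfies |K(x,y) − K(x,z) − K(z,y) + K(z,z)| ≤ 2L‖x−z‖₂^{γ/2}‖y−z‖₂^{γ/2} for all x, y ∈ S. -/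
/-- Even-order case of Lemma 3.1 with `r = 0`: if `Φ` is `γ`-Hölder with constant `L`
on a ball `B` centered at the origin and `K(x,y) = Φ(x−y)`, with all relevant
differences lying in `B`, then the second difference of `K` around `z` satisfies
`|K(x,y) − K(x,z) − K(z,y) + K(z,z)| ≤ 2L‖x−z‖^{γ/2}‖y−z‖^{γ/2}`. -/
theorem holder_kernel_second_difference {d : ℕ} (R : ℝ)
    (Φ : EuclideanSpace ℝ (Fin d) → ℝ)
    (L γ : ℝ) (hL : 0 ≤ L) (hγ0 : 0 < γ) (hγ1 : γ ≤ 1)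
    (hΦ : ∀ u ∈ Metric.closedBall (0 : EuclideanSpace ℝ (Fin d)) R,
      ∀ v ∈ Metric.closedBall (0 : EuclideanSpace ℝ (Fin d)) R,
        |Φ u - Φ v| ≤ L * ‖u - v‖ ^ γ)
    (S : Set (EuclideanSpace ℝ (Fin d))) (z : EuclideanSpace ℝ (Fin d)) (hz : z ∈ S)
    (h0 : (0 : EuclideanSpace ℝ (Fin d)) ∈ Metric.closedBall (0 : EuclideanSpace ℝ (Fin d)) R)
    (hS : ∀ x ∈ S, ∀ y ∈ S, x - y ∈ Metric.closedBall (0 : EuclideanSpace ℝ (Fin d)) R) :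
    ∀ x ∈ S, ∀ y ∈ S,
      |Φ (x - y) - Φ (x - z) - Φ (z - y) + Φ (z - z)| ≤
        2 * L * ‖x - z‖ ^ (γ / 2) * ‖y - z‖ ^ (γ / 2) := by
  intro x hx y hy
  set a := ‖x - z‖ with ha
  set b := ‖y - z‖ with hb
  have ha0 : 0 ≤ a := norm_nonneg _
  have hb0 : 0 ≤ b := norm_nonneg _
  -- two bounds on the second difference
  have key : |Φ (x - y) - Φ (x - z) - Φ (z - y) + Φ (z - z)| ≤ 2 * L * min a b ^ γ := by
    rcases min_cases a b with ⟨hm, hab⟩ | ⟨hm, hab⟩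
    · -- min = a : group as (Φ(x−y)−Φ(z−y)) − (Φ(x−z)−Φ(z−z))
      have h1 := hΦ (x - y) (hS x hx y hy) (z - y) (hS z hz y hy)
      have h2 := hΦ (x - z) (hS x hx z hz) (z - z) (hS z hz z hz)
      have e1 : x - y - (z - y) = x - z := by abel
      have e2 : x - z - (z - z) = x - z := by abel
      rw [e1] at h1; rw [e2] at h2
      calc |Φ (x - y) - Φ (x - z) - Φ (z - y) + Φ (z - z)|
          = |(Φ (x - y) - Φ (z - y)) - (Φ (x - z) - Φ (z - z))| := by ring_nf
        _ ≤ |Φ (x - y) - Φ (z - y)| + |Φ (x - z) - Φ (z - z)| := abs_sub _ _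
        _ ≤ L * a ^ γ + L * a ^ γ := add_le_add h1 h2
        _ = 2 * L * a ^ γ := by ring
        _ = 2 * L * min a b ^ γ := by rw [hm]
    · -- min = b
      have h1 := hΦ (x - y) (hS x hx y hy) (x - z) (hS x hx z hz)
      have h2 := hΦ (z - y) (hS z hz y hy) (z - z) (hS z hz z hz)
      have e1 : x - y - (x - z) = -(y - z) := by abel
      have e2 : z - y - (z - z) = -(y - z) := by abel
      rw [e1, norm_neg] at h1; rw [e2, norm_neg] at h2
      calc |Φ (x - y) - Φ (x - z) - Φ (z - y) + Φ (z - z)|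
          = |(Φ (x - y) - Φ (x - z)) - (Φ (z - y) - Φ (z - z))| := by ring_nf
        _ ≤ |Φ (x - y) - Φ (x - z)| + |Φ (z - y) - Φ (z - z)| := abs_sub _ _
        _ ≤ L * b ^ γ + L * b ^ γ := add_le_add h1 h2
        _ = 2 * L * b ^ γ := by ring
        _ = 2 * L * min a b ^ γ := by rw [hm]
  refine key.trans ?_
  have hmin0 : 0 ≤ min a b := le_min ha0 hb0
  have hγ2 : 0 ≤ γ / 2 := by positivity
  have hsplit : min a b ^ γ = min a b ^ (γ / 2) * min a b ^ (γ / 2) := by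
    rw [← Real.rpow_add' hmin0 (by linarith : γ / 2 + γ / 2 ≠ 0)]
    ring_nf
  have h1 : min a b ^ (γ / 2) ≤ a ^ (γ / 2) :=
    Real.rpow_le_rpow hmin0 (min_le_left _ _) hγ2
  have h2 : min a b ^ (γ / 2) ≤ b ^ (γ / 2) :=
    Real.rpow_le_rpow hmin0 (min_le_right _ _) hγ2
  have := mul_le_mul h1 h2 (Real.rpow_nonneg hmin0 _) (Real.rpow_nonneg ha0 _)
  calc 2 * L * min a b ^ γ = 2 * L * (min a b ^ (γ / 2) * min a b ^ (γ / 2)) := by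
        rw [hsplit]
    _ ≤ 2 * L * (a ^ (γ / 2) * b ^ (γ / 2)) := by
        apply mul_le_mul_of_nonneg_left this (by linarith)
    _ = 2 * L * a ^ (γ / 2) * b ^ (γ / 2) := by ring
end

section
/- Let Φ : B → ℝ be continuously differentiable on a ball B ⊆ ℝ^d centered at the origin, with ∇Φ γ-Hölder continuous on B with constant L in each component (so ‖∇Φ(u)−∇Φ(v)‖₂ ≤ √d·L‖u−v‖₂^γ). Let U(x,y) = Φ(x−y), and let z, x, y be points such that all differences x−y^s, z−y^s lie in B where y^s = z + s(y−z), s ∈ [0,1]. Then |U(x,y) − U(x,z) − U(z,y) + U(z,z)| ≤ √d·L·‖x−z‖₂^{(1+γ)/2}·‖y−z‖₂^{(1+γ)/2}. -/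
open Set Metric

private lemma rpow_sym_aux {a b γ : ℝ} (ha : 0 ≤ a) (hb : 0 ≤ b)
    (hγ0 : 0 < γ) (hγ1 : γ ≤ 1) (hba : b ≤ a) :
    a ^ γ * b ≤ a ^ ((1 + γ) / 2) * b ^ ((1 + γ) / 2) := by
  rcases hb.eq_or_lt with h | hb'
  · rw [← h]
    simp [Real.zero_rpow (by positivity : (1 + γ) / 2 ≠ 0)]
  · have ha' : 0 < a := lt_of_lt_of_le hb' hba
    have ht : (0:ℝ) ≤ (1 - γ) / 2 := by linarith
    have hbt : b ^ ((1 - γ) / 2) ≤ a ^ ((1 - γ) / 2) :=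
      Real.rpow_le_rpow hb hba ht
    have hb1 : b = b ^ ((1 + γ) / 2) * b ^ ((1 - γ) / 2) := by
      rw [← Real.rpow_add hb']
      norm_num
      rw [show (1 + γ) / 2 + (1 - γ) / 2 = 1 by ring, Real.rpow_one]
    have ha1 : a ^ γ * a ^ ((1 - γ) / 2) = a ^ ((1 + γ) / 2) := by
      rw [← Real.rpow_add ha']; ring_nf
    calc a ^ γ * b = a ^ γ * (b ^ ((1 + γ) / 2) * b ^ ((1 - γ) / 2)) := by rw [← hb1]
      _ ≤ a ^ γ * (b ^ ((1 + γ) / 2) * a ^ ((1 - γ) / 2)) := by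
          gcongr
      _ = a ^ ((1 + γ) / 2) * b ^ ((1 + γ) / 2) := by rw [← ha1]; ring

private lemma one_sided {d : ℕ} (Rad : ℝ)
    (Φ : EuclideanSpace ℝ (Fin d) → ℝ)
    (L γ : ℝ)
    (hdiff : ∀ u ∈ Metric.closedBall (0 : EuclideanSpace ℝ (Fin d)) Rad,
      DifferentiableAt ℝ Φ u)
    (hgrad : ∀ u ∈ Metric.closedBall (0 : EuclideanSpace ℝ (Fin d)) Rad,
      ∀ v ∈ Metric.closedBall (0 : EuclideanSpace ℝ (Fin d)) Rad,
        ‖fderiv ℝ Φ u - fderiv ℝ Φ v‖ ≤ Real.sqrt d * L * ‖u - v‖ ^ γ)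
    (a₀ b₀ v : EuclideanSpace ℝ (Fin d))
    (h1 : ∀ s ∈ Set.Icc (0:ℝ) 1,
      a₀ + s • v ∈ Metric.closedBall (0 : EuclideanSpace ℝ (Fin d)) Rad)
    (h2 : ∀ s ∈ Set.Icc (0:ℝ) 1,
      b₀ + s • v ∈ Metric.closedBall (0 : EuclideanSpace ℝ (Fin d)) Rad) :
    |Φ (a₀ + v) - Φ a₀ - (Φ (b₀ + v) - Φ b₀)| ≤
      Real.sqrt d * L * ‖a₀ - b₀‖ ^ γ * ‖v‖ := by
  set g : ℝ → ℝ := fun s => Φ (a₀ + s • v) - Φ (b₀ + s • v) with hg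
  set g' : ℝ → ℝ := fun s =>
    fderiv ℝ Φ (a₀ + s • v) v - fderiv ℝ Φ (b₀ + s • v) v with hg'
  have hcurve : ∀ (c : EuclideanSpace ℝ (Fin d)) (s : ℝ),
      HasDerivAt (fun t : ℝ => c + t • v) v s := by
    intro c s
    have h := ((hasDerivAt_id s).smul_const v).const_add c
    simpa using h
  have hderiv : ∀ s ∈ Set.Icc (0:ℝ) 1, HasDerivWithinAt g (g' s) (Set.Icc 0 1) s := by
    intro s hs
    have hA : HasDerivAt (fun t : ℝ => Φ (a₀ + t • v)) (fderiv ℝ Φ (a₀ + s • v) v) s :=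
      ((hdiff _ (h1 s hs)).hasFDerivAt).comp_hasDerivAt s (hcurve a₀ s)
    have hB : HasDerivAt (fun t : ℝ => Φ (b₀ + t • v)) (fderiv ℝ Φ (b₀ + s • v) v) s :=
      ((hdiff _ (h2 s hs)).hasFDerivAt).comp_hasDerivAt s (hcurve b₀ s)
    exact (hA.sub hB).hasDerivWithinAt
  have bound : ∀ s ∈ Set.Ico (0:ℝ) 1,
      ‖g' s‖ ≤ Real.sqrt d * L * ‖a₀ - b₀‖ ^ γ * ‖v‖ := by
    intro s hs
    have hs' : s ∈ Set.Icc (0:ℝ) 1 := Set.Ico_subset_Icc_self hs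
    have heq : g' s = (fderiv ℝ Φ (a₀ + s • v) - fderiv ℝ Φ (b₀ + s • v)) v := by
      simp [hg', ContinuousLinearMap.sub_apply]
    rw [heq]
    calc ‖(fderiv ℝ Φ (a₀ + s • v) - fderiv ℝ Φ (b₀ + s • v)) v‖
        ≤ ‖fderiv ℝ Φ (a₀ + s • v) - fderiv ℝ Φ (b₀ + s • v)‖ * ‖v‖ :=
          ContinuousLinearMap.le_opNorm _ v
      _ ≤ Real.sqrt d * L * ‖(a₀ + s • v) - (b₀ + s • v)‖ ^ γ * ‖v‖ := by
          gcongr ?_ * ‖v‖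
          exact hgrad _ (h1 s hs') _ (h2 s hs')
      _ = Real.sqrt d * L * ‖a₀ - b₀‖ ^ γ * ‖v‖ := by
          congr 3
          abel
  have key := norm_image_sub_le_of_norm_deriv_le_segment_01' hderiv bound
  have hg1 : g 1 = Φ (a₀ + v) - Φ (b₀ + v) := by simp [hg]
  have hg0 : g 0 = Φ a₀ - Φ b₀ := by simp [hg]
  rw [hg1, hg0, Real.norm_eq_abs] at key
  calc |Φ (a₀ + v) - Φ a₀ - (Φ (b₀ + v) - Φ b₀)|
      = |Φ (a₀ + v) - Φ (b₀ + v) - (Φ a₀ - Φ b₀)| := by ring_nf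
    _ ≤ _ := key

/-- Odd-order case of Lemma 3.1 with `r = 1`: if `Φ` is differentiable with the
gradient `γ`-Hölder on a ball `B` with `‖∇Φ(u) − ∇Φ(v)‖ ≤ √d·L‖u−v‖^γ`, and for
`U(x,y) = Φ(x−y)` all the differences `x − yˢ`, `z − yˢ` with
`yˢ = z + s(y−z)`, `s ∈ [0,1]`, lie in `B`, then
`|U(x,y) − U(x,z) − U(z,y) + U(z,z)| ≤ √d·L·‖x−z‖^{(1+γ)/2}·‖y−z‖^{(1+γ)/2}`. -/
theorem gradient_holder_kernel_second_difference {d : ℕ} (Rad : ℝ)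
    (Φ : EuclideanSpace ℝ (Fin d) → ℝ)
    (L γ : ℝ) (hL : 0 ≤ L) (hγ0 : 0 < γ) (hγ1 : γ ≤ 1)
    (hdiff : ∀ u ∈ Metric.closedBall (0 : EuclideanSpace ℝ (Fin d)) Rad,
      DifferentiableAt ℝ Φ u)
    (hgrad : ∀ u ∈ Metric.closedBall (0 : EuclideanSpace ℝ (Fin d)) Rad,
      ∀ v ∈ Metric.closedBall (0 : EuclideanSpace ℝ (Fin d)) Rad,
        ‖fderiv ℝ Φ u - fderiv ℝ Φ v‖ ≤ Real.sqrt d * L * ‖u - v‖ ^ γ)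
    (z x y : EuclideanSpace ℝ (Fin d))
    (hxy : ∀ s ∈ Set.Icc (0:ℝ) 1,
      x - (z + s • (y - z)) ∈ Metric.closedBall (0 : EuclideanSpace ℝ (Fin d)) Rad ∧
      z - (z + s • (y - z)) ∈ Metric.closedBall (0 : EuclideanSpace ℝ (Fin d)) Rad) :
    |Φ (x - y) - Φ (x - z) - Φ (z - y) + Φ (z - z)| ≤
      Real.sqrt d * L * ‖x - z‖ ^ ((1 + γ) / 2) * ‖y - z‖ ^ ((1 + γ) / 2) := by
  have hsd : (0:ℝ) ≤ Real.sqrt d * L := mul_nonneg (Real.sqrt_nonneg _) hL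
  -- key memberships
  have h0 : (0:ℝ) ∈ Set.Icc (0:ℝ) 1 := ⟨le_refl _, zero_le_one⟩
  have h1 : (1:ℝ) ∈ Set.Icc (0:ℝ) 1 := ⟨zero_le_one, le_refl _⟩
  have hxz : x - z ∈ Metric.closedBall (0 : EuclideanSpace ℝ (Fin d)) Rad := by
    have := (hxy 0 h0).1; simpa using this
  have h0B : (0 : EuclideanSpace ℝ (Fin d)) ∈ Metric.closedBall (0 : EuclideanSpace ℝ (Fin d)) Rad := by
    have := (hxy 0 h0).2; simpa using this
  have hxyB : x - y ∈ Metric.closedBall (0 : EuclideanSpace ℝ (Fin d)) Rad := by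
    have := (hxy 1 h1).1
    have heq : x - (z + (1:ℝ) • (y - z)) = x - y := by module
    rwa [heq] at this
  have hzyB : z - y ∈ Metric.closedBall (0 : EuclideanSpace ℝ (Fin d)) Rad := by
    have := (hxy 1 h1).2
    have heq : z - (z + (1:ℝ) • (y - z)) = z - y := by module
    rwa [heq] at this
  have hconv : Convex ℝ (Metric.closedBall (0 : EuclideanSpace ℝ (Fin d)) Rad) :=
    convex_closedBall _ _
  -- first one-sided bound : √d L ‖x-z‖^γ ‖y-z‖
  have b1 : |Φ (x - y) - Φ (x - z) - (Φ (z - y) - Φ 0)| ≤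
      Real.sqrt d * L * ‖x - z‖ ^ γ * ‖y - z‖ := by
    have key := one_sided Rad Φ L γ hdiff hgrad (x - z) 0 (z - y)
      (by
        intro s hs
        have := (hxy s hs).1
        have heq : x - z + s • (z - y) = x - (z + s • (y - z)) := by module
        rwa [heq]
        )
      (by
        intro s hs
        have heq : (0 : EuclideanSpace ℝ (Fin d)) + s • (z - y)
            = (1 - s) • (0 : EuclideanSpace ℝ (Fin d)) + s • (z - y) := by module
        rw [heq]
        exact hconv h0B hzyB (by linarith [hs.2]) hs.1 (by ring))
    have e1 : x - z + (z - y) = x - y := by module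
    have e2 : (0 : EuclideanSpace ℝ (Fin d)) + (z - y) = z - y := by module
    have e3 : x - z - 0 = x - z := by module
    rw [e1, e2, e3] at key
    calc |Φ (x - y) - Φ (x - z) - (Φ (z - y) - Φ 0)| ≤
        Real.sqrt d * L * ‖x - z‖ ^ γ * ‖z - y‖ := key
      _ = Real.sqrt d * L * ‖x - z‖ ^ γ * ‖y - z‖ := by rw [norm_sub_rev z y]
  -- second one-sided bound : √d L ‖y-z‖^γ ‖x-z‖
  have b2 : |Φ (x - y) - Φ (z - y) - (Φ (x - z) - Φ 0)| ≤
      Real.sqrt d * L * ‖y - z‖ ^ γ * ‖x - z‖ := by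
    have key := one_sided Rad Φ L γ hdiff hgrad (z - y) 0 (x - z)
      (by
        intro s hs
        have heq : z - y + s • (x - z) = (1 - s) • (z - y) + s • (x - y) := by module
        rw [heq]
        exact hconv hzyB hxyB (by linarith [hs.2]) hs.1 (by ring))
      (by
        intro s hs
        have heq : (0 : EuclideanSpace ℝ (Fin d)) + s • (x - z)
            = (1 - s) • (0 : EuclideanSpace ℝ (Fin d)) + s • (x - z) := by module
        rw [heq]
        exact hconv h0B hxz (by linarith [hs.2]) hs.1 (by ring))
    have e1 : z - y + (x - z) = x - y := by module
    have e2 : (0 : EuclideanSpace ℝ (Fin d)) + (x - z) = x - z := by module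
    have e3 : z - y - 0 = z - y := by module
    rw [e1, e2, e3] at key
    calc |Φ (x - y) - Φ (z - y) - (Φ (x - z) - Φ 0)| ≤
        Real.sqrt d * L * ‖z - y‖ ^ γ * ‖x - z‖ := key
      _ = Real.sqrt d * L * ‖y - z‖ ^ γ * ‖x - z‖ := by rw [norm_sub_rev z y]
  have hzz : z - z = (0 : EuclideanSpace ℝ (Fin d)) := sub_self z
  rw [hzz]
  rcases le_total ‖y - z‖ ‖x - z‖ with hba | hab
  · calc |Φ (x - y) - Φ (x - z) - Φ (z - y) + Φ 0|
        = |Φ (x - y) - Φ (x - z) - (Φ (z - y) - Φ 0)| := by ring_nf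
      _ ≤ Real.sqrt d * L * ‖x - z‖ ^ γ * ‖y - z‖ := b1
      _ = Real.sqrt d * L * (‖x - z‖ ^ γ * ‖y - z‖) := by ring
      _ ≤ Real.sqrt d * L * (‖x - z‖ ^ ((1 + γ) / 2) * ‖y - z‖ ^ ((1 + γ) / 2)) := by
          exact mul_le_mul_of_nonneg_left
            (rpow_sym_aux (norm_nonneg _) (norm_nonneg _) hγ0 hγ1 hba) hsd
      _ = Real.sqrt d * L * ‖x - z‖ ^ ((1 + γ) / 2) * ‖y - z‖ ^ ((1 + γ) / 2) := by ring
  · calc |Φ (x - y) - Φ (x - z) - Φ (z - y) + Φ 0|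
        = |Φ (x - y) - Φ (z - y) - (Φ (x - z) - Φ 0)| := by ring_nf
      _ ≤ Real.sqrt d * L * ‖y - z‖ ^ γ * ‖x - z‖ := b2
      _ = Real.sqrt d * L * (‖y - z‖ ^ γ * ‖x - z‖) := by ring
      _ ≤ Real.sqrt d * L * (‖y - z‖ ^ ((1 + γ) / 2) * ‖x - z‖ ^ ((1 + γ) / 2)) := by
          exact mul_le_mul_of_nonneg_left
            (rpow_sym_aux (norm_nonneg _) (norm_nonneg _) hγ0 hγ1 hab) hsd
      _ = Real.sqrt d * L * ‖x - z‖ ^ ((1 + γ) / 2) * ‖y - z‖ ^ ((1 + γ) / 2) := by ring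
end

section
/- For ν > 0 with ν ∉ 2ℕ, let r = ⌈ν⌉ − 1 and γ = ν − r ∈ (0,1]. Then the function Φ(x) = ‖x‖₂^ν on ℝ^d belongs to C^{r,γ}(B) for any ball B centered at the origin: Φ is r times continuously differentiable and all partial derivatives of order r are γ-Hölder continuous on B. -/
open Filter Metric Set

namespace PHSHolderAux

variable {d : ℕ} {F : Type} [NormedAddCommGroup F] [NormedSpace ℝ F]

local notation "E" => EuclideanSpace ℝ (Fin d)

set_option linter.unusedSectionVars false
set_option linter.unusedVariables false



lemma hom_zero (f : E → F) (ρ : ℝ) (hρ : 0 < ρ)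
    (hom : ∀ c : ℝ, 0 < c → ∀ x : E, f (c • x) = (c ^ ρ) • f x) : f 0 = 0 := by
  have h := hom 2 two_pos 0
  rw [smul_zero] at h
  have h2 : (1:ℝ) < (2:ℝ) ^ ρ := by
    have := Real.rpow_lt_rpow_of_exponent_lt (x := 2) one_lt_two hρ
    simpa [Real.rpow_zero] using this
  have h3 : ((1:ℝ) - (2:ℝ) ^ ρ) • f 0 = 0 := by
    rw [sub_smul, one_smul]
    rw [← h]
    simp
  rcases smul_eq_zero.mp h3 with h' | h'
  · exfalso; have : (1:ℝ) - 2 ^ ρ < 0 := by linarith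
    rw [h'] at this; exact lt_irrefl _ this
  · exact h'

lemma bound_of_hom (f : E → F) (ρ : ℝ)
    (hc : ∀ x : E, x ≠ 0 → ContinuousAt f x)
    (hom : ∀ c : ℝ, 0 < c → ∀ x : E, x ≠ 0 → f (c • x) = (c ^ ρ) • f x) :
    ∃ C : ℝ, 0 ≤ C ∧ ∀ x : E, x ≠ 0 → ‖f x‖ ≤ C * ‖x‖ ^ ρ := by
  obtain ⟨C, hC⟩ := (isCompact_sphere (0 : E) 1).exists_bound_of_continuousOn
    (fun x hx => (hc x (by
      intro h
      rw [mem_sphere_iff_norm, h] at hx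
      norm_num at hx)).continuousWithinAt)
  refine ⟨max C 0, le_max_right _ _, fun x hx => ?_⟩
  have hn : 0 < ‖x‖ := norm_pos_iff.mpr hx
  have hxs : (‖x‖⁻¹ • x : E) ∈ sphere (0 : E) 1 := by
    rw [mem_sphere_iff_norm, sub_zero, norm_smul, norm_inv, norm_norm,
      inv_mul_cancel₀ hn.ne']
  have hx0 : (‖x‖⁻¹ • x : E) ≠ 0 := by
    intro h; rw [h] at hxs
    rw [mem_sphere_iff_norm, sub_zero, norm_zero] at hxs; norm_num at hxs
  have heq : f x = (‖x‖ ^ ρ) • f (‖x‖⁻¹ • x) := by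
    have := hom ‖x‖ hn (‖x‖⁻¹ • x) hx0
    rwa [smul_inv_smul₀ hn.ne'] at this
  rw [heq, norm_smul, Real.norm_eq_abs, abs_of_nonneg (Real.rpow_nonneg hn.le ρ)]
  rw [mul_comm (max C 0)]
  exact mul_le_mul_of_nonneg_left ((hC _ hxs).trans (le_max_left _ _)) (Real.rpow_nonneg hn.le ρ)




lemma tendsto_aux (C ρ : ℝ) (hρ : 0 < ρ) :
    Tendsto (fun x : E => C * ‖x‖ ^ ρ) (nhds 0) (nhds 0) := by
  have h1 : Tendsto (fun x : E => ‖x‖) (nhds 0) (nhds 0) := by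
    simpa using (continuous_norm : Continuous fun x : E => ‖x‖).tendsto 0
  have h2 : ContinuousAt (fun s : ℝ => C * s ^ ρ) 0 :=
    continuousAt_const.mul (Real.continuousAt_rpow_const 0 ρ (Or.inr hρ.le))
  have := h2.tendsto.comp h1
  simpa [Function.comp_def, Real.zero_rpow hρ.ne'] using this

lemma continuousAt_zero_of_bound (f : E → F) (ρ C : ℝ) (hρ : 0 < ρ) (hf0 : f 0 = 0)
    (hb : ∀ x : E, x ≠ 0 → ‖f x‖ ≤ C * ‖x‖ ^ ρ) (hC : 0 ≤ C) : ContinuousAt f 0 := by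
  rw [ContinuousAt, hf0]
  apply squeeze_zero_norm (a := fun x : E => C * ‖x‖ ^ ρ) ?_ (tendsto_aux C ρ hρ)
  intro x
  by_cases hx : x = 0
  · simp [hx, hf0, Real.zero_rpow hρ.ne']
  · exact hb x hx

lemma hasFDerivAt_zero_of_bound (f : E → F) (ρ C : ℝ) (hρ : 1 < ρ) (hf0 : f 0 = 0)
    (hb : ∀ x : E, x ≠ 0 → ‖f x‖ ≤ C * ‖x‖ ^ ρ) :
    HasFDerivAt f (0 : E →L[ℝ] F) 0 := by
  rw [hasFDerivAt_iff_tendsto]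
  have hρ1 : (0:ℝ) < ρ - 1 := by linarith
  simp only [sub_zero, hf0, ContinuousLinearMap.zero_apply, sub_zero]
  apply squeeze_zero (g := fun x : E => C * ‖x‖ ^ (ρ - 1)) ?_ ?_ (tendsto_aux C (ρ-1) hρ1)
  · intro t; positivity
  · intro t
    by_cases ht : t = 0
    · simp [ht, hf0, Real.zero_rpow hρ1.ne']
    · have hn : 0 < ‖t‖ := norm_pos_iff.mpr ht
      calc ‖t‖⁻¹ * ‖f t‖
          ≤ ‖t‖⁻¹ * (C * ‖t‖ ^ ρ) :=
            mul_le_mul_of_nonneg_left (hb t ht) (inv_nonneg.mpr hn.le)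
        _ = C * ‖t‖ ^ (ρ - 1) := by
            rw [Real.rpow_sub hn, Real.rpow_one]; field_simp

lemma fderiv_hom (f : E → F) (ρ : ℝ)
    (hsm : ∀ x : E, x ≠ 0 → ∀ n : ℕ, ContDiffAt ℝ n f x)
    (hom : ∀ c : ℝ, 0 < c → ∀ x : E, f (c • x) = (c ^ ρ) • f x)
    {c : ℝ} (hc : 0 < c) {x : E} (hx : x ≠ 0) :
    fderiv ℝ f (c • x) = (c ^ (ρ - 1)) • fderiv ℝ f x := by
  have hcx : (c • x : E) ≠ 0 := smul_ne_zero hc.ne' hx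
  have hdx : DifferentiableAt ℝ f x := (hsm x hx 1).differentiableAt (by norm_cast)
  have hdcx : DifferentiableAt ℝ f (c • x) := (hsm _ hcx 1).differentiableAt (by norm_cast)
  have hinner : HasFDerivAt (fun y : E => c • y) (c • ContinuousLinearMap.id ℝ E) x := by
    exact (hasFDerivAt_id x).const_smul c
  have h1 : HasFDerivAt (fun y : E => f (c • y))
      ((fderiv ℝ f (c • x)).comp (c • ContinuousLinearMap.id ℝ E)) x :=
    hdcx.hasFDerivAt.comp x hinner
  have h2 : HasFDerivAt (fun y : E => (c ^ ρ) • f y) ((c ^ ρ) • fderiv ℝ f x) x :=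
    hdx.hasFDerivAt.const_smul _
  have heq : (fun y : E => f (c • y)) = fun y : E => (c ^ ρ) • f y :=
    funext (fun y => hom c hc y)
  rw [heq] at h1
  have key := h1.unique h2
  ext v
  have hv := congrArg (fun L : E →L[ℝ] F => L v) key
  simp only [ContinuousLinearMap.coe_comp', Function.comp_apply,
    ContinuousLinearMap.smul_apply, ContinuousLinearMap.coe_id',
    ContinuousLinearMap.coe_smul', Pi.smul_apply, id_eq] at hv
  -- hv : fderiv ℝ f (c • x) (c • v) = c ^ ρ • fderiv ℝ f x v
  rw [map_smul] at hv
  have : fderiv ℝ f (c • x) v = (c⁻¹ * c ^ ρ) • fderiv ℝ f x v := by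
    rw [mul_smul, ← hv, smul_smul, inv_mul_cancel₀ hc.ne', one_smul]
  rw [ContinuousLinearMap.smul_apply, this]
  congr 1
  rw [Real.rpow_sub hc, Real.rpow_one]
  field_simp




lemma holder_aux (f : E → F) (ρ C₀ C₁ : ℝ) (hρ0 : 0 < ρ) (hρ1 : ρ ≤ 1)
    (hC₀ : 0 ≤ C₀) (hC₁ : 0 ≤ C₁) (hf0 : f 0 = 0)
    (hb0 : ∀ x : E, x ≠ 0 → ‖f x‖ ≤ C₀ * ‖x‖ ^ ρ)
    (hb1 : ∀ x : E, x ≠ 0 → ‖fderiv ℝ f x‖ ≤ C₁ * ‖x‖ ^ (ρ - 1))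
    (hdiff : ∀ x : E, x ≠ 0 → DifferentiableAt ℝ f x)
    (u v : E) (hle : ‖v‖ ≤ ‖u‖) :
    ‖f u - f v‖ ≤ (4 * C₀ + C₁) * ‖u - v‖ ^ ρ := by
  by_cases huv : u = v
  · simp [huv, Real.zero_rpow hρ0.ne']
  have hd : 0 < ‖u - v‖ := by
    rw [norm_pos_iff]; exact sub_ne_zero.mpr huv
  have hu0 : u ≠ 0 := by
    rintro rfl
    rw [norm_zero] at hle
    exact huv (by rw [(norm_le_zero_iff.mp hle)])
  have hupos : 0 < ‖u‖ := norm_pos_iff.mpr hu0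
  have hrnn : 0 ≤ ‖u - v‖ ^ ρ := Real.rpow_nonneg hd.le ρ
  by_cases hcase : ‖u‖ ≤ 2 * ‖u - v‖
  · have h1 : ‖f u‖ ≤ C₀ * ‖u‖ ^ ρ := hb0 u hu0
    have h2 : ‖f v‖ ≤ C₀ * ‖u‖ ^ ρ := by
      by_cases hv : v = 0
      · simp only [hv, hf0, norm_zero]
        positivity
      · exact (hb0 v hv).trans (mul_le_mul_of_nonneg_left
          (Real.rpow_le_rpow (norm_nonneg _) hle hρ0.le) hC₀)
    have h3 : ‖u‖ ^ ρ ≤ (2 * ‖u - v‖) ^ ρ :=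
      Real.rpow_le_rpow hupos.le hcase hρ0.le
    have h4 : ((2:ℝ) * ‖u - v‖) ^ ρ = 2 ^ ρ * ‖u - v‖ ^ ρ :=
      Real.mul_rpow (by norm_num) hd.le
    have h5 : (2:ℝ) ^ ρ ≤ 2 := by
      have := Real.rpow_le_rpow_of_exponent_le (x := 2) one_le_two hρ1
      rwa [Real.rpow_one] at this
    calc ‖f u - f v‖ ≤ ‖f u‖ + ‖f v‖ := norm_sub_le _ _
      _ ≤ 2 * (C₀ * ‖u‖ ^ ρ) := by linarith
      _ ≤ 2 * (C₀ * ((2 * ‖u - v‖) ^ ρ)) := by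
          apply mul_le_mul_of_nonneg_left _ (by norm_num)
          exact mul_le_mul_of_nonneg_left h3 hC₀
      _ = 2 * C₀ * (2 ^ ρ * ‖u - v‖ ^ ρ) := by rw [h4]; ring
      _ ≤ 2 * C₀ * (2 * ‖u - v‖ ^ ρ) := by
          apply mul_le_mul_of_nonneg_left _ (by positivity)
          exact mul_le_mul_of_nonneg_right h5 hrnn
      _ = 4 * C₀ * ‖u - v‖ ^ ρ := by ring
      _ ≤ (4 * C₀ + C₁) * ‖u - v‖ ^ ρ := by nlinarith
  · push_neg at hcase
    set m : ℝ := ‖u‖ - ‖u - v‖ with hm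
    have hmpos : 0 < m := by
      rw [hm]; linarith
    have hlem : ‖u - v‖ ≤ m := by rw [hm]; linarith
    have hseg : ∀ x ∈ segment ℝ v u, m ≤ ‖x‖ := by
      rintro x ⟨a, b, ha, hb, hab, rfl⟩
      have hx1 : u - (a • v + b • u) = a • (u - v) := by
        have hb1 : b = 1 - a := by linarith
        rw [hb1]; module
      have h5 : ‖u - (a • v + b • u)‖ = a * ‖u - v‖ := by
        rw [hx1, norm_smul, Real.norm_eq_abs, abs_of_nonneg ha]
      have h6 : ‖u‖ - ‖u - (a • v + b • u)‖ ≤ ‖a • v + b • u‖ := by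
        have := norm_sub_norm_le u (a • v + b • u)
        linarith [norm_sub_norm_le u (a • v + b • u)]
      have h7 : a * ‖u - v‖ ≤ ‖u - v‖ := by
        nlinarith [norm_nonneg (u - v)]
      rw [hm]; linarith [h5 ▸ h6]
    have hne : ∀ x ∈ segment ℝ v u, x ≠ 0 := by
      intro x hx h0
      have := hseg x hx
      rw [h0, norm_zero] at this
      linarith
    have hfd : ∀ x ∈ segment ℝ v u,
        HasFDerivWithinAt f (fderiv ℝ f x) (segment ℝ v u) x := fun x hx =>
      ((hdiff x (hne x hx)).hasFDerivAt).hasFDerivWithinAt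
    have hbd : ∀ x ∈ segment ℝ v u, ‖fderiv ℝ f x‖ ≤ C₁ * m ^ (ρ - 1) := by
      intro x hx
      refine (hb1 x (hne x hx)).trans ?_
      exact mul_le_mul_of_nonneg_left
        (Real.rpow_le_rpow_of_nonpos hmpos (hseg x hx) (by linarith)) hC₁
    have key : m ^ (ρ - 1) * ‖u - v‖ ≤ ‖u - v‖ ^ ρ := by
      have h7 : ‖u - v‖ = ‖u - v‖ ^ (1 - ρ) * ‖u - v‖ ^ ρ := by
        rw [← Real.rpow_add hd]; norm_num
      have h8 : ‖u - v‖ ^ (1 - ρ) ≤ m ^ (1 - ρ) :=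
        Real.rpow_le_rpow hd.le hlem (by linarith)
      have h9 : m ^ (ρ - 1) * m ^ (1 - ρ) = 1 := by
        rw [← Real.rpow_add hmpos]; norm_num
      calc m ^ (ρ - 1) * ‖u - v‖ = m ^ (ρ - 1) * ‖u - v‖ ^ (1 - ρ) * ‖u - v‖ ^ ρ := by
            rw [mul_assoc, ← h7]
        _ ≤ m ^ (ρ - 1) * m ^ (1 - ρ) * ‖u - v‖ ^ ρ := by
            apply mul_le_mul_of_nonneg_right _ hrnn
            exact mul_le_mul_of_nonneg_left h8 (Real.rpow_nonneg hmpos.le _)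
        _ = ‖u - v‖ ^ ρ := by rw [h9, one_mul]
    have huv' : ‖f u - f v‖ ≤ C₁ * m ^ (ρ - 1) * ‖u - v‖ :=
      (convex_segment v u).norm_image_sub_le_of_norm_hasFDerivWithin_le
        hfd hbd (left_mem_segment ℝ v u) (right_mem_segment ℝ v u)
    calc ‖f u - f v‖ ≤ C₁ * m ^ (ρ - 1) * ‖u - v‖ := huv'
      _ = C₁ * (m ^ (ρ - 1) * ‖u - v‖) := by ring
      _ ≤ C₁ * ‖u - v‖ ^ ρ := mul_le_mul_of_nonneg_left key hC₁
      _ ≤ (4 * C₀ + C₁) * ‖u - v‖ ^ ρ := by nlinarith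

lemma holder_of_bounds (f : E → F) (ρ C₀ C₁ : ℝ) (hρ0 : 0 < ρ) (hρ1 : ρ ≤ 1)
    (hC₀ : 0 ≤ C₀) (hC₁ : 0 ≤ C₁) (hf0 : f 0 = 0)
    (hb0 : ∀ x : E, x ≠ 0 → ‖f x‖ ≤ C₀ * ‖x‖ ^ ρ)
    (hb1 : ∀ x : E, x ≠ 0 → ‖fderiv ℝ f x‖ ≤ C₁ * ‖x‖ ^ (ρ - 1))
    (hdiff : ∀ x : E, x ≠ 0 → DifferentiableAt ℝ f x) :
    ∀ u v : E, ‖f u - f v‖ ≤ (4 * C₀ + C₁) * ‖u - v‖ ^ ρ := by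
  intro u v
  rcases le_total ‖v‖ ‖u‖ with h | h
  · exact holder_aux f ρ C₀ C₁ hρ0 hρ1 hC₀ hC₁ hf0 hb0 hb1 hdiff u v h
  · have := holder_aux f ρ C₀ C₁ hρ0 hρ1 hC₀ hC₁ hf0 hb0 hb1 hdiff v u h
    rw [norm_sub_rev (f u), norm_sub_rev u v]
    exact this

lemma diff_zero (f : E → F) (u v : E) :
    ‖iteratedFDeriv ℝ 0 f u - iteratedFDeriv ℝ 0 f v‖ = ‖f u - f v‖ := by
  rw [iteratedFDeriv_zero_eq_comp]
  rw [Function.comp_apply, Function.comp_apply, ← LinearIsometryEquiv.map_sub,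
    LinearIsometryEquiv.norm_map]

lemma diff_succ (f : E → F) (n : ℕ) (u v : E) :
    ‖iteratedFDeriv ℝ (n + 1) f u - iteratedFDeriv ℝ (n + 1) f v‖ =
      ‖iteratedFDeriv ℝ n (fderiv ℝ f) u - iteratedFDeriv ℝ n (fderiv ℝ f) v‖ := by
  rw [iteratedFDeriv_succ_eq_comp_right (n := n) (x := u),
    iteratedFDeriv_succ_eq_comp_right (n := n) (x := v)]
  rw [Function.comp_apply, Function.comp_apply, ← LinearIsometryEquiv.map_sub,
    LinearIsometryEquiv.norm_map]

lemma main (d : ℕ) : ∀ (k : ℕ), ∀ {F : Type} [NormedAddCommGroup F] [NormedSpace ℝ F],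
    ∀ (f : EuclideanSpace ℝ (Fin d) → F) (ρ : ℝ),
    (∀ x : EuclideanSpace ℝ (Fin d), x ≠ 0 → ∀ n : ℕ, ContDiffAt ℝ n f x) →
    (∀ c : ℝ, 0 < c → ∀ x : EuclideanSpace ℝ (Fin d), f (c • x) = (c ^ ρ) • f x) →
    ((k : ℝ) < ρ) →
    ContDiffAt ℝ k f 0 ∧ (ρ ≤ (k : ℝ) + 1 → ∃ L : ℝ, ∀ u v : EuclideanSpace ℝ (Fin d),
      ‖iteratedFDeriv ℝ k f u - iteratedFDeriv ℝ k f v‖ ≤ L * ‖u - v‖ ^ (ρ - k)) := by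
  intro k
  induction k with
  | zero =>
    intro F _ _ f ρ hsm hom hk
    simp only [Nat.cast_zero] at hk ⊢
    have hf0 : f 0 = 0 := hom_zero f ρ hk hom
    obtain ⟨C₀, hC₀, hb0⟩ := bound_of_hom f ρ (fun x hx => (hsm x hx 0).continuousAt)
      (fun c hc x _ => hom c hc x)
    have hcont0 : ContinuousAt f 0 := continuousAt_zero_of_bound f ρ C₀ hk hf0 hb0 hC₀
    have hcont : Continuous f := by
      rw [continuous_iff_continuousAt]
      intro x
      by_cases hx : x = 0
      · rwa [hx]
      · exact (hsm x hx 0).continuousAt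
    constructor
    · exact (contDiff_zero.mpr hcont).contDiffAt
    · intro hρ1
      have hsm' : ∀ x : EuclideanSpace ℝ (Fin d), x ≠ 0 →
          ContinuousAt (fderiv ℝ f) x := fun x hx =>
        ((hsm x hx 1).fderiv_right (m := 0) (by norm_num)).continuousAt
      have hom' : ∀ c : ℝ, 0 < c → ∀ x : EuclideanSpace ℝ (Fin d), x ≠ 0 →
          fderiv ℝ f (c • x) = (c ^ (ρ - 1)) • fderiv ℝ f x := fun c hc x hx =>
        fderiv_hom f ρ hsm hom hc hx
      obtain ⟨C₁, hC₁, hb1⟩ := bound_of_hom (fderiv ℝ f) (ρ - 1) hsm' hom'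
      refine ⟨4 * C₀ + C₁, fun u v => ?_⟩
      rw [diff_zero, sub_zero]
      exact holder_of_bounds f ρ C₀ C₁ hk (by linarith) hC₀ hC₁ hf0 hb0 hb1
        (fun x hx => (hsm x hx 1).differentiableAt (by norm_cast)) u v
  | succ k ih =>
    intro F _ _ f ρ hsm hom hk
    have hkc : ((k : ℝ)) < ρ - 1 := by push_cast at hk ⊢; linarith
    have hρ1 : (1:ℝ) < ρ := by
      have : (0:ℝ) ≤ (k:ℝ) := Nat.cast_nonneg k
      push_cast at hk; linarith
    obtain ⟨C, hC0, hC⟩ := bound_of_hom f ρ (fun x hx => (hsm x hx 0).continuousAt)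
      (fun c hc x _ => hom c hc x)
    have hf0 : f 0 = 0 := hom_zero f ρ (by linarith) hom
    have hd0 : HasFDerivAt f (0 : EuclideanSpace ℝ (Fin d) →L[ℝ] F) 0 :=
      hasFDerivAt_zero_of_bound f ρ C hρ1 hf0 hC
    have hdAll : ∀ y, HasFDerivAt f (fderiv ℝ f y) y := by
      intro y
      by_cases hy : y = 0
      · subst hy; rwa [hd0.fderiv]
      · exact ((hsm y hy 1).differentiableAt (by norm_cast)).hasFDerivAt
    have hsm' : ∀ x : EuclideanSpace ℝ (Fin d), x ≠ 0 → ∀ n : ℕ,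
        ContDiffAt ℝ n (fderiv ℝ f) x := fun x hx n =>
      (hsm x hx (n + 1)).fderiv_right (by push_cast; rfl)
    have hom' : ∀ c : ℝ, 0 < c → ∀ x : EuclideanSpace ℝ (Fin d),
        fderiv ℝ f (c • x) = (c ^ (ρ - 1)) • fderiv ℝ f x := by
      intro c hc x
      by_cases hx : x = 0
      · subst hx; rw [smul_zero, hd0.fderiv, smul_zero]
      · exact fderiv_hom f ρ hsm hom hc hx
    obtain ⟨ihC, ihH⟩ := ih (fderiv ℝ f) (ρ - 1) hsm' hom' hkc
    constructor
    · have : ContDiffAt ℝ ((k : ℕ) + 1) f 0 :=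
        contDiffAt_succ_iff_hasFDerivAt.mpr
          ⟨fderiv ℝ f, ⟨univ, univ_mem, fun x _ => hdAll x⟩, ihC⟩
      exact_mod_cast this
    · intro hρ2
      obtain ⟨L, hL⟩ := ihH (by push_cast at hρ2 ⊢; linarith)
      refine ⟨L, fun u v => ?_⟩
      rw [diff_succ]
      have he : ρ - ((k + 1 : ℕ) : ℝ) = (ρ - 1) - (k : ℝ) := by push_cast; ring
      rw [he]
      exact hL u v


end PHSHolderAux

open PHSHolderAux in

/-- Hölder regularity of the polyharmonic spline radial function: for `ν > 0`,
`ν ∉ 2ℕ`, with `r = ⌈ν⌉ − 1` and `γ = ν − r`, the function `Φ(x) = ‖x‖₂^ν` is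
`r` times continuously differentiable on `ℝ^d` and its `r`-th order derivatives
are `γ`-Hölder continuous on every ball centered at the origin. -/
theorem polyharmonic_spline_holder_regularity (d : ℕ) (ν : ℝ) (hν : 0 < ν)
    (hν2 : ∀ n : ℕ, ν ≠ 2 * n) (r : ℕ) (hr : r = ⌈ν⌉₊ - 1) (γ : ℝ) (hγ : γ = ν - r) :
    ContDiff ℝ r (fun x : EuclideanSpace ℝ (Fin d) => ‖x‖ ^ ν) ∧
      ∀ R : ℝ, 0 < R → ∃ L : ℝ,
        ∀ u ∈ Metric.closedBall (0 : EuclideanSpace ℝ (Fin d)) R,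
        ∀ v ∈ Metric.closedBall (0 : EuclideanSpace ℝ (Fin d)) R,
          ‖iteratedFDeriv ℝ r (fun x : EuclideanSpace ℝ (Fin d) => ‖x‖ ^ ν) u -
              iteratedFDeriv ℝ r (fun x : EuclideanSpace ℝ (Fin d) => ‖x‖ ^ ν) v‖ ≤
            L * ‖u - v‖ ^ γ := by
  set f : EuclideanSpace ℝ (Fin d) → ℝ := fun x => ‖x‖ ^ ν with hf
  have hceil : 1 ≤ ⌈ν⌉₊ := by
    rw [Nat.one_le_iff_ne_zero]
    intro h
    have := Nat.ceil_pos.mpr hν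
    omega
  have hrcast : (r : ℝ) = (⌈ν⌉₊ : ℝ) - 1 := by
    rw [hr, Nat.cast_sub hceil, Nat.cast_one]
  have hkρ : (r : ℝ) < ν := by
    have h1 : (⌈ν⌉₊ : ℝ) < ν + 1 := Nat.ceil_lt_add_one hν.le
    rw [hrcast]; linarith
  have hρ2 : ν ≤ (r : ℝ) + 1 := by
    rw [hrcast]
    have := Nat.le_ceil ν
    linarith
  have hsm : ∀ x : EuclideanSpace ℝ (Fin d), x ≠ 0 → ∀ n : ℕ, ContDiffAt ℝ n f x := by
    intro x hx n
    have h1 : ContDiffAt ℝ n (fun y : EuclideanSpace ℝ (Fin d) => ‖y‖) x :=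
      contDiffAt_norm ℝ hx
    exact h1.rpow_const_of_ne (by simpa using hx)
  have hom : ∀ c : ℝ, 0 < c → ∀ x : EuclideanSpace ℝ (Fin d),
      f (c • x) = (c ^ ν) • f x := by
    intro c hc x
    simp only [hf, norm_smul, Real.norm_eq_abs, abs_of_pos hc, smul_eq_mul]
    rw [Real.mul_rpow hc.le (norm_nonneg x)]
  obtain ⟨hcd, hhold⟩ := PHSHolderAux.main d r f ν hsm hom hkρ
  constructor
  · rw [contDiff_iff_contDiffAt]
    intro x
    by_cases hx : x = 0
    · rwa [hx]
    · exact hsm x hx r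
  · intro R _
    obtain ⟨L, hL⟩ := hhold hρ2
    exact ⟨L, fun u _ v _ => by rw [hγ]; exact hL u v⟩
end

section
/- For every n ∈ ℕ and every γ ∈ (0,1), the thin plate spline function Φ(x) = ‖x‖₂^{2n} log‖x‖₂ (extended by 0 at x = 0) belongs to C^{2n−1,γ}(B) for any ball B ⊆ ℝ^d centered at the origin: it is 2n−1 times continuously differentiable and its partial derivatives of order 2n−1 are γ-Hölder continuous on B. -/
open Real Set Filter Metric Topology

namespace TPS


universe u

variable {E : Type u} [NormedAddCommGroup E] [NormedSpace ℝ E]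

/-- Key inductive regularity lemma: a function vanishing at the origin, smooth away from the
origin, whose `j`-th derivatives are `O(‖x‖^(m-j+σ))` near the origin, is `C^m`, and its
iterated derivatives up to order `m` vanish at the origin. -/
lemma reg (σ : ℝ) (hσ : 0 < σ) :
    ∀ (m : ℕ) {F : Type u} [NormedAddCommGroup F] [NormedSpace ℝ F] (h : E → F), h 0 = 0 →
      ContDiffOn ℝ ((⊤ : ℕ∞) : WithTop ℕ∞) h {(0 : E)}ᶜ →
      (∀ j : ℕ, j ≤ m → ∃ C : ℝ, ∀ x : E, x ≠ 0 → ‖x‖ ≤ 1 →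
        ‖iteratedFDeriv ℝ j h x‖ ≤ C * ‖x‖ ^ ((m - j : ℝ) + σ)) →
      ContDiff ℝ m h ∧ ∀ j : ℕ, j ≤ m → iteratedFDeriv ℝ j h 0 = 0 := by
  intro m
  induction m with
  | zero =>
    intro F _ _ h h0 hs hb
    have hopen : IsOpen {(0 : E)}ᶜ := isOpen_compl_singleton
    constructor
    · rw [show ((0 : ℕ) : WithTop ℕ∞) = 0 by norm_cast, contDiff_zero,
        continuous_iff_continuousAt]
      intro x
      by_cases hx : x = 0
      · subst hx
        obtain ⟨C, hC⟩ := hb 0 le_rfl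
        have hball : ∀ᶠ x : E in 𝓝 0, ‖x‖ ≤ 1 := by
          filter_upwards [Metric.closedBall_mem_nhds (0 : E) one_pos] with x hx
          simpa [Metric.mem_closedBall, dist_zero_right] using hx
        have hev : ∀ᶠ x : E in 𝓝 0, ‖h x‖ ≤ |C| * ‖x‖ ^ σ := by
          filter_upwards [hball] with x hx1
          by_cases hx : x = 0
          · subst hx
            simp [h0, Real.zero_rpow hσ.ne']
          · have h' := hC x hx hx1
            rw [norm_iteratedFDeriv_zero] at h'
            norm_num at h'
            calc ‖h x‖ ≤ C * ‖x‖ ^ σ := h'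
              _ ≤ |C| * ‖x‖ ^ σ := by
                  exact mul_le_mul_of_nonneg_right (le_abs_self C)
                    (Real.rpow_nonneg (norm_nonneg x) σ)
        have htend : Tendsto (fun x : E => |C| * ‖x‖ ^ σ) (𝓝 0) (𝓝 0) := by
          have h1 : Tendsto (fun x : E => ‖x‖) (𝓝 0) (𝓝 0) := tendsto_norm_zero
          have h2 : ContinuousAt (fun t : ℝ => |C| * t ^ σ) 0 :=
            ((Real.continuousAt_rpow_const 0 σ (Or.inr hσ.le))).const_mul |C|
          rw [ContinuousAt] at h2
          simp only [Real.zero_rpow hσ.ne', mul_zero] at h2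
          exact h2.comp h1
        have : Tendsto h (𝓝 0) (𝓝 0) := squeeze_zero_norm' hev htend
        rw [ContinuousAt, h0]
        exact this
      · exact (hs.contDiffAt (hopen.mem_nhds hx)).continuousAt
    · intro j hj
      interval_cases j
      ext m
      simp [h0]
  | succ m IH =>
    intro F _ _ h h0 hs hb
    have hopen : IsOpen {(0 : E)}ᶜ := isOpen_compl_singleton
    have hdiff : ∀ x : E, x ≠ 0 → DifferentiableAt ℝ h x := fun x hx =>
      (hs.contDiffAt (hopen.mem_nhds hx)).differentiableAt (by simp)
    -- differentiability at 0 with derivative 0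
    have hder0 : HasFDerivAt h (0 : E →L[ℝ] F) 0 := by
      rw [hasFDerivAt_iff_isLittleO_nhds_zero]
      rw [Asymptotics.isLittleO_iff]
      intro c hc
      obtain ⟨C, hC⟩ := hb 0 (Nat.zero_le _)
      have htend : Tendsto (fun x : E => |C| * ‖x‖ ^ ((m : ℝ) + σ)) (𝓝 0) (𝓝 0) := by
        have h1 : Tendsto (fun x : E => ‖x‖) (𝓝 0) (𝓝 0) := tendsto_norm_zero
        have h2 : ContinuousAt (fun t : ℝ => |C| * t ^ ((m : ℝ) + σ)) 0 :=
          ((Real.continuousAt_rpow_const 0 _ (Or.inr (by positivity : (0:ℝ) ≤ (m : ℝ) + σ)))).const_mul |C|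
        rw [ContinuousAt] at h2
        simp only [Real.zero_rpow (by positivity : ((m : ℝ) + σ) ≠ 0), mul_zero] at h2
        exact h2.comp h1
      have hev : ∀ᶠ x : E in 𝓝 0, |C| * ‖x‖ ^ ((m : ℝ) + σ) ≤ c :=
        htend.eventually (eventually_le_nhds hc)
      have hball : ∀ᶠ x : E in 𝓝 0, ‖x‖ ≤ 1 := by
        filter_upwards [Metric.closedBall_mem_nhds (0 : E) one_pos] with x hx
        simpa [Metric.mem_closedBall, dist_zero_right] using hx
      filter_upwards [hev, hball] with x hx1 hx2
      simp only [zero_add, h0, sub_zero, ContinuousLinearMap.zero_apply]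
      by_cases hx : x = 0
      · subst hx; simp [h0]
      · have hb0 := hC x hx hx2
        rw [norm_iteratedFDeriv_zero] at hb0
        have hexp : ((m + 1 : ℕ) : ℝ) - ((0 : ℕ) : ℝ) + σ = ((m : ℝ) + σ) + 1 := by
          push_cast; ring
        rw [hexp] at hb0
        have hxpos : (0 : ℝ) < ‖x‖ := norm_pos_iff.2 hx
        rw [Real.rpow_add hxpos, Real.rpow_one] at hb0
        calc ‖h x‖ ≤ C * (‖x‖ ^ ((m : ℝ) + σ) * ‖x‖) := hb0
          _ ≤ (|C| * ‖x‖ ^ ((m : ℝ) + σ)) * ‖x‖ := by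
              rw [← mul_assoc]
              gcongr
              exact le_abs_self C
          _ ≤ c * ‖x‖ := by gcongr
    have hfd0 : fderiv ℝ h 0 = 0 := hder0.fderiv
    have hdiffall : Differentiable ℝ h := by
      intro x
      by_cases hx : x = 0
      · subst hx; exact hder0.differentiableAt
      · exact hdiff x hx
    have hsf : ContDiffOn ℝ ((⊤ : ℕ∞) : WithTop ℕ∞) (fderiv ℝ h) {(0 : E)}ᶜ := by
      apply hs.fderiv_of_isOpen hopen
      exact_mod_cast le_top
    have hbf : ∀ j : ℕ, j ≤ m → ∃ C : ℝ, ∀ x : E, x ≠ 0 → ‖x‖ ≤ 1 →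
        ‖iteratedFDeriv ℝ j (fderiv ℝ h) x‖ ≤ C * ‖x‖ ^ ((m - j : ℝ) + σ) := by
      intro j hj
      obtain ⟨C, hC⟩ := hb (j + 1) (Nat.succ_le_succ hj)
      refine ⟨C, fun x hx hx1 => ?_⟩
      rw [norm_iteratedFDeriv_fderiv]
      have h' := hC x hx hx1
      have hexp : ((m + 1 : ℕ) : ℝ) - ((j + 1 : ℕ) : ℝ) + σ = ((m : ℝ) - j) + σ := by
        push_cast; ring
      rwa [hexp] at h'
    obtain ⟨hcd, hval⟩ := IH (fderiv ℝ h) hfd0 hsf hbf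
    constructor
    · have h1 : ContDiff ℝ ((m : WithTop ℕ∞) + 1) h := by
        rw [contDiff_succ_iff_fderiv]
        exact ⟨hdiffall, fun hm => absurd hm (WithTop.natCast_ne_top m), hcd⟩
      have h2 : ((m + 1 : ℕ) : WithTop ℕ∞) = (m : WithTop ℕ∞) + 1 := by push_cast; ring
      rwa [h2]
    · intro j hj
      match j with
      | 0 =>
        ext m'
        simp [h0]
      | (i + 1) =>
        have hi : i ≤ m := Nat.succ_le_succ_iff.1 hj
        have hnorm : ‖iteratedFDeriv ℝ (i + 1) h 0‖ = 0 := by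
          rw [← norm_iteratedFDeriv_fderiv, hval i hi, norm_zero]
        exact norm_eq_zero.1 hnorm



variable {d : ℕ}

lemma f_smooth (n : ℕ) :
    ContDiffOn ℝ ((⊤ : ℕ∞) : WithTop ℕ∞)
      (fun x : EuclideanSpace ℝ (Fin d) => ‖x‖ ^ (2 * n) * Real.log ‖x‖)
      {(0 : EuclideanSpace ℝ (Fin d))}ᶜ := by
  intro x hx
  have hx' : x ≠ 0 := hx
  apply ContDiffAt.contDiffWithinAt
  have h1 : ContDiffAt ℝ ((⊤ : ℕ∞) : WithTop ℕ∞) (fun x : EuclideanSpace ℝ (Fin d) => ‖x‖) x :=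
    contDiffAt_norm ℝ hx'
  exact (h1.pow _).mul ((Real.contDiffAt_log.2 (norm_ne_zero_iff.2 hx')).comp x h1)

lemma q_smooth (n : ℕ) :
    ContDiff ℝ ((⊤ : ℕ∞) : WithTop ℕ∞)
      (fun x : EuclideanSpace ℝ (Fin d) => ‖x‖ ^ (2 * n)) := by
  have h : (fun x : EuclideanSpace ℝ (Fin d) => ‖x‖ ^ (2 * n))
      = fun x : EuclideanSpace ℝ (Fin d) => (‖x‖ ^ 2) ^ n := by
    funext x; rw [← pow_mul]
  rw [h]
  exact (contDiff_norm_sq ℝ).pow n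

/-- Scaling estimate for the iterated derivatives of the thin plate spline away from `0`. -/
lemma scale (n : ℕ) (hn : 1 ≤ n) (j : ℕ) :
    ∃ A B : ℝ, 0 ≤ A ∧ 0 ≤ B ∧ ∀ x : EuclideanSpace ℝ (Fin d), x ≠ 0 →
      ‖iteratedFDeriv ℝ j (fun x : EuclideanSpace ℝ (Fin d) => ‖x‖ ^ (2 * n) * Real.log ‖x‖) x‖
        ≤ (A + B * |Real.log ‖x‖|) * ‖x‖ ^ ((2 * n : ℝ) - j) := by
  classical
  set f := fun x : EuclideanSpace ℝ (Fin d) => ‖x‖ ^ (2 * n) * Real.log ‖x‖ with hf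
  set q := fun x : EuclideanSpace ℝ (Fin d) => ‖x‖ ^ (2 * n) with hq
  set s : Set (EuclideanSpace ℝ (Fin d)) := {(0 : EuclideanSpace ℝ (Fin d))}ᶜ with hsdef
  have hopen : IsOpen s := isOpen_compl_singleton
  have hsu : UniqueDiffOn ℝ s := hopen.uniqueDiffOn
  -- continuity of the iterated derivatives on s
  have hfc : ContinuousOn (iteratedFDeriv ℝ j f) s := by
    have h1 : ContinuousOn (iteratedFDerivWithin ℝ j f s) s :=
      (f_smooth n).continuousOn_iteratedFDerivWithin (by exact_mod_cast le_top) hsu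
    exact h1.congr fun x hx => (iteratedFDerivWithin_of_isOpen j hopen hx).symm
  have hsphere : Metric.sphere (0 : EuclideanSpace ℝ (Fin d)) 1 ⊆ s := by
    intro x hx
    have : ‖x‖ = 1 := by simpa [Metric.mem_sphere, dist_zero_right] using hx
    simp only [hsdef, Set.mem_compl_iff, Set.mem_singleton_iff]
    intro h0
    rw [h0] at this; simp at this
  obtain ⟨A0, hA0⟩ := (isCompact_sphere (0 : EuclideanSpace ℝ (Fin d)) 1).exists_bound_of_continuousOn
    (hfc.mono hsphere)
  have hqc : ContinuousOn (iteratedFDeriv ℝ j q) (Metric.sphere (0 : EuclideanSpace ℝ (Fin d)) 1) :=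
    ((q_smooth n).continuous_iteratedFDeriv (by exact_mod_cast le_top)).continuousOn
  obtain ⟨B0, hB0⟩ := (isCompact_sphere (0 : EuclideanSpace ℝ (Fin d)) 1).exists_bound_of_continuousOn hqc
  refine ⟨max A0 0, max B0 0, le_max_right _ _, le_max_right _ _, ?_⟩
  intro x hx
  have hr : (0 : ℝ) < ‖x‖ := norm_pos_iff.2 hx
  set r := ‖x‖ with hrdef
  set y := r⁻¹ • x with hydef
  have hy1 : ‖y‖ = 1 := by
    rw [hydef, norm_smul, norm_inv, Real.norm_eq_abs, abs_of_pos hr, inv_mul_cancel₀ hr.ne']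
  have hyne : y ≠ 0 := by
    intro h0; rw [h0, norm_zero] at hy1; simp at hy1
  have hys : y ∈ s := hyne
  have hxy : r • y = x := smul_inv_smul₀ hr.ne' x
  set g : EuclideanSpace ℝ (Fin d) →L[ℝ] EuclideanSpace ℝ (Fin d) :=
    r • ContinuousLinearMap.id ℝ (EuclideanSpace ℝ (Fin d)) with hgdef
  have happ : ∀ z, g z = r • z := fun z => rfl
  have hgpre : g ⁻¹' s = s := by
    ext z
    simp only [hsdef, Set.mem_preimage, Set.mem_compl_iff, Set.mem_singleton_iff, happ,
      smul_eq_zero, not_or]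
    constructor
    · intro h; exact h.2
    · intro h; exact ⟨hr.ne', h⟩
  have hgy : g y ∈ s := by rw [happ, hxy]; exact hx
  -- chain rule for composition with scaling
  have key : iteratedFDerivWithin ℝ j (f ∘ g) (g ⁻¹' s) y =
      (iteratedFDerivWithin ℝ j f s (g y)).compContinuousLinearMap fun _ => g :=
    g.iteratedFDerivWithin_comp_right (f_smooth n) hsu (by rw [hgpre]; exact hsu) hgy
      (by exact_mod_cast le_top)
  rw [hgpre] at key
  have hgyx : g y = x := by rw [happ, hxy]
  rw [hgyx] at key
  -- the functional equation
  have hfun : f ∘ g = (r ^ (2 * n)) • f + (r ^ (2 * n) * Real.log r) • q := by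
    funext z
    simp only [Function.comp_apply, Pi.add_apply, Pi.smul_apply, smul_eq_mul, happ, hf, hq]
    by_cases hz : z = 0
    · subst hz
      simp [zero_pow (by omega : 2 * n ≠ 0)]
    · have hzpos : (0 : ℝ) < ‖z‖ := norm_pos_iff.2 hz
      rw [norm_smul, Real.norm_eq_abs, abs_of_pos hr, mul_pow,
        Real.log_mul hr.ne' hzpos.ne']
      ring
  -- iterated derivative of the RHS
  have hsum : iteratedFDerivWithin ℝ j (f ∘ g) s y =
      (r ^ (2 * n)) • iteratedFDerivWithin ℝ j f s y +
        (r ^ (2 * n) * Real.log r) • iteratedFDerivWithin ℝ j q s y := by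
    rw [hfun]
    have hfj : ContDiffOn ℝ (j : WithTop ℕ∞) f s := (f_smooth n).of_le (by exact_mod_cast le_top)
    have hqj : ContDiffOn ℝ (j : WithTop ℕ∞) q s :=
      (q_smooth n).contDiffOn.of_le (by exact_mod_cast le_top)
    have hcf : ContDiffOn ℝ (j : WithTop ℕ∞) ((r ^ (2 * n)) • f) s := by
      rw [Pi.smul_def]; exact hfj.const_smul _
    have hcq : ContDiffOn ℝ (j : WithTop ℕ∞) ((r ^ (2 * n) * Real.log r) • q) s := by
      rw [Pi.smul_def]; exact hqj.const_smul _
    rw [iteratedFDerivWithin_add_apply (hcf y hys) (hcq y hys) hsu hys,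
      iteratedFDerivWithin_const_smul_apply (hfj y hys) hsu hys,
      iteratedFDerivWithin_const_smul_apply (hqj y hys) hsu hys]
  -- norm of the composed multilinear map
  have hcomp : (iteratedFDerivWithin ℝ j f s x).compContinuousLinearMap (fun _ => g)
      = (r ^ j) • iteratedFDerivWithin ℝ j f s x := by
    ext m
    simp only [ContinuousMultilinearMap.compContinuousLinearMap_apply,
      ContinuousMultilinearMap.smul_apply, happ]
    have h := (iteratedFDerivWithin ℝ j f s x).map_smul_univ (fun _ : Fin j => r) m
    rw [Finset.prod_const] at h
    simpa using h
  -- put everything together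
  have heq : ‖iteratedFDerivWithin ℝ j f s x‖ * r ^ j ≤
      r ^ (2 * n) * (max A0 0 + max B0 0 * |Real.log r|) := by
    have h1 : ‖(r ^ j) • iteratedFDerivWithin ℝ j f s x‖
        = r ^ j * ‖iteratedFDerivWithin ℝ j f s x‖ := by
      rw [norm_smul, Real.norm_eq_abs, abs_of_pos (pow_pos hr j)]
    have h2 := key.symm
    calc ‖iteratedFDerivWithin ℝ j f s x‖ * r ^ j
        = ‖(r ^ j) • iteratedFDerivWithin ℝ j f s x‖ := by rw [h1]; ring
      _ = ‖iteratedFDerivWithin ℝ j (f ∘ g) s y‖ := by rw [key, hcomp]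
      _ = ‖(r ^ (2 * n)) • iteratedFDerivWithin ℝ j f s y +
            (r ^ (2 * n) * Real.log r) • iteratedFDerivWithin ℝ j q s y‖ := by rw [hsum]
      _ ≤ ‖(r ^ (2 * n)) • iteratedFDerivWithin ℝ j f s y‖ +
            ‖(r ^ (2 * n) * Real.log r) • iteratedFDerivWithin ℝ j q s y‖ := norm_add_le _ _
      _ ≤ r ^ (2 * n) * max A0 0 + (r ^ (2 * n) * |Real.log r|) * max B0 0 := by
          apply add_le_add
          · rw [norm_smul, Real.norm_eq_abs, abs_of_pos (pow_pos hr _)]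
            apply mul_le_mul_of_nonneg_left _ (pow_pos hr _).le
            rw [iteratedFDerivWithin_of_isOpen j hopen hys]
            exact le_max_of_le_left (hA0 y (by simpa [Metric.mem_sphere, dist_zero_right] using hy1))
          · rw [norm_smul, Real.norm_eq_abs, abs_mul, abs_of_pos (pow_pos hr _)]
            apply mul_le_mul_of_nonneg_left _ (by positivity)
            rw [iteratedFDerivWithin_of_isOpen j hopen hys]
            exact le_max_of_le_left (hB0 y (by simpa [Metric.mem_sphere, dist_zero_right] using hy1))
      _ = r ^ (2 * n) * (max A0 0 + max B0 0 * |Real.log r|) := by ring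
  -- convert to the rpow form
  have hglobal : iteratedFDeriv ℝ j f x = iteratedFDerivWithin ℝ j f s x :=
    (iteratedFDerivWithin_of_isOpen j hopen hx).symm
  rw [hglobal]
  have hrpowj : (0 : ℝ) < r ^ (j : ℝ) := Real.rpow_pos_of_pos hr _
  have hcast1 : (r : ℝ) ^ j = r ^ (j : ℝ) := (Real.rpow_natCast r j).symm
  have hcast2 : (r : ℝ) ^ (2 * n) = r ^ ((2 * n : ℕ) : ℝ) := (Real.rpow_natCast r (2 * n)).symm
  set T := max A0 0 + max B0 0 * |Real.log r| with hT
  rw [← mul_le_mul_iff_left₀ hrpowj]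
  have hstep : T * r ^ ((2 * n : ℝ) - (j : ℝ)) * r ^ (j : ℝ)
      = r ^ ((2 * n : ℕ) : ℝ) * T := by
    have hexp : ((2 * n : ℝ) - (j : ℝ)) + (j : ℝ) = ((2 * n : ℕ) : ℝ) := by push_cast; ring
    calc T * r ^ ((2 * n : ℝ) - (j : ℝ)) * r ^ (j : ℝ)
        = T * r ^ (((2 * n : ℝ) - (j : ℝ)) + (j : ℝ)) := by rw [Real.rpow_add hr]; ring
      _ = r ^ ((2 * n : ℕ) : ℝ) * T := by rw [hexp]; ring
  rw [hstep, ← hcast1, ← hcast2]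
  exact heq



lemma abs_log_le {δ r : ℝ} (hδ : 0 < δ) (hr : 0 < r) :
    |Real.log r| ≤ δ⁻¹ * (r ^ δ + r ^ (-δ)) := by
  have key : ∀ t : ℝ, 0 < t → Real.log t ≤ δ⁻¹ * t ^ δ := by
    intro t ht
    have h1 : Real.log (t ^ δ) ≤ t ^ δ :=
      (Real.log_le_sub_one_of_pos (Real.rpow_pos_of_pos ht δ)).trans (by linarith)
    rw [Real.log_rpow ht] at h1
    calc Real.log t = δ⁻¹ * (δ * Real.log t) := by field_simp
      _ ≤ δ⁻¹ * t ^ δ := mul_le_mul_of_nonneg_left h1 (inv_nonneg.2 hδ.le)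
  have hp1 : (0:ℝ) < r ^ δ := Real.rpow_pos_of_pos hr δ
  have hp2 : (0:ℝ) < r ^ (-δ) := Real.rpow_pos_of_pos hr _
  have h2 := key r hr
  have h3 := key r⁻¹ (inv_pos.2 hr)
  rw [Real.log_inv, Real.inv_rpow hr.le, ← Real.rpow_neg hr.le] at h3
  have hδi : (0:ℝ) ≤ δ⁻¹ := (inv_nonneg.2 hδ.le)
  rw [abs_le]
  constructor
  · nlinarith [mul_nonneg hδi hp1.le]
  · nlinarith [mul_nonneg hδi hp2.le]


lemma deriv_bound {d : ℕ} (n : ℕ) (hn : 1 ≤ n) (j : ℕ) (δ M : ℝ) (hδ : 0 < δ) (hM : 1 ≤ M) :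
    ∃ C : ℝ, 0 ≤ C ∧ ∀ x : EuclideanSpace ℝ (Fin d), x ≠ 0 → ‖x‖ ≤ M →
      ‖iteratedFDeriv ℝ j (fun x : EuclideanSpace ℝ (Fin d) => ‖x‖ ^ (2 * n) * Real.log ‖x‖) x‖
        ≤ C * ‖x‖ ^ ((2 * n : ℝ) - j - δ) := by
  obtain ⟨A, B, hA, hB, hbound⟩ := scale (d := d) n hn j
  have hMpos : (0:ℝ) < M := lt_of_lt_of_le one_pos hM
  refine ⟨A * M ^ δ + B * δ⁻¹ * M ^ (2*δ) + B * δ⁻¹ * M ^ δ, by positivity, ?_⟩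
  intro x hx hxM
  have hr : (0:ℝ) < ‖x‖ := norm_pos_iff.2 hx
  set r := ‖x‖ with hrdef
  set e := (2 * n : ℝ) - j - δ with he
  have hre : (0:ℝ) < r ^ e := Real.rpow_pos_of_pos hr e
  have hpow : ∀ p : ℝ, e ≤ p → r ^ p ≤ M ^ (p - e) * r ^ e := by
    intro p hp
    have h0 : r ^ p = r ^ (p - e) * r ^ e := by
      rw [← Real.rpow_add hr]; ring_nf
    rw [h0]
    exact mul_le_mul_of_nonneg_right
      (Real.rpow_le_rpow hr.le hxM (by linarith)) hre.le
  have hlog := abs_log_le hδ hr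
  have h1 := hbound x hx
  have he0 : (2*n:ℝ) - j = e + δ := by rw [he]; ring
  have key : (A + B * |Real.log r|) * r ^ ((2*n:ℝ) - j)
      ≤ A * r ^ (e + δ) + (B * δ⁻¹) * r ^ (e + 2*δ) + (B * δ⁻¹) * r ^ e := by
    rw [he0]
    have hrp : (0:ℝ) < r ^ (e + δ) := Real.rpow_pos_of_pos hr _
    have hsplit : B * |Real.log r| * r ^ (e + δ)
        ≤ (B * δ⁻¹) * r ^ (e + 2*δ) + (B * δ⁻¹) * r ^ e := by
      have h2 : B * |Real.log r| ≤ B * (δ⁻¹ * (r ^ δ + r ^ (-δ))) :=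
        mul_le_mul_of_nonneg_left hlog hB
      have ha : r ^ (e + δ) * r ^ δ = r ^ (e + 2*δ) := by
        rw [← Real.rpow_add hr]; congr 1; ring
      have hb' : r ^ (e + δ) * r ^ (-δ) = r ^ e := by
        rw [← Real.rpow_add hr]; congr 1; ring
      have h3 : B * (δ⁻¹ * (r ^ δ + r ^ (-δ))) * r ^ (e + δ)
          = (B * δ⁻¹) * r ^ (e + 2*δ) + (B * δ⁻¹) * r ^ e := by
        rw [← ha, ← hb']; ring
      calc B * |Real.log r| * r ^ (e + δ)
          ≤ B * (δ⁻¹ * (r ^ δ + r ^ (-δ))) * r ^ (e + δ) :=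
            mul_le_mul_of_nonneg_right h2 hrp.le
        _ = _ := h3
    have hexpand : (A + B * |Real.log r|) * r ^ (e + δ)
        = A * r ^ (e+δ) + B * |Real.log r| * r ^ (e+δ) := by ring
    rw [hexpand]
    linarith
  have t1 : A * r ^ (e + δ) ≤ A * M ^ δ * r ^ e := by
    have h := hpow (e + δ) (by linarith)
    calc A * r ^ (e+δ) ≤ A * (M ^ ((e+δ) - e) * r ^ e) := mul_le_mul_of_nonneg_left h hA
      _ = A * M ^ δ * r ^ e := by rw [show (e+δ)-e = δ by ring]; ring
  have hBd : (0:ℝ) ≤ B * δ⁻¹ := mul_nonneg hB (inv_nonneg.2 hδ.le)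
  have t2 : (B * δ⁻¹) * r ^ (e + 2*δ) ≤ B * δ⁻¹ * M ^ (2*δ) * r ^ e := by
    have h := hpow (e + 2*δ) (by linarith)
    calc (B * δ⁻¹) * r ^ (e+2*δ) ≤ (B * δ⁻¹) * (M ^ ((e+2*δ) - e) * r ^ e) :=
          mul_le_mul_of_nonneg_left h hBd
      _ = B * δ⁻¹ * M ^ (2*δ) * r ^ e := by rw [show (e+2*δ)-e = 2*δ by ring]; ring
  have t3 : (B * δ⁻¹) * r ^ e ≤ B * δ⁻¹ * M ^ δ * r ^ e := by
    have hM1 : (1:ℝ) ≤ M ^ δ := by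
      calc (1:ℝ) = 1 ^ δ := (Real.one_rpow δ).symm
        _ ≤ M ^ δ := Real.rpow_le_rpow zero_le_one hM hδ.le
    have h := mul_le_mul_of_nonneg_left hM1 (mul_nonneg hBd hre.le)
    calc (B * δ⁻¹) * r ^ e = B * δ⁻¹ * r ^ e * 1 := by ring
      _ ≤ B * δ⁻¹ * r ^ e * M ^ δ := by
          calc B * δ⁻¹ * r ^ e * 1 = B * δ⁻¹ * r ^ e * 1 := rfl
            _ ≤ _ := by nlinarith [h]
      _ = B * δ⁻¹ * M ^ δ * r ^ e := by ring
  calc ‖iteratedFDeriv ℝ j (fun x : EuclideanSpace ℝ (Fin d) => ‖x‖ ^ (2 * n) * Real.log ‖x‖) x‖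
      ≤ (A + B * |Real.log r|) * r ^ ((2*n:ℝ) - j) := h1
    _ ≤ A * r ^ (e + δ) + (B * δ⁻¹) * r ^ (e + 2*δ) + (B * δ⁻¹) * r ^ e := key
    _ ≤ A * M ^ δ * r ^ e + B * δ⁻¹ * M ^ (2*δ) * r ^ e + B * δ⁻¹ * M ^ δ * r ^ e := by
        linarith
    _ = (A * M ^ δ + B * δ⁻¹ * M ^ (2*δ) + B * δ⁻¹ * M ^ δ) * r ^ e := by ring


end TPS

set_option maxHeartbeats 1600000 in
/-- Hölder regularity of the thin plate spline: for `n ≥ 1` and `γ ∈ (0,1)`, the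
function `Φ(x) = ‖x‖₂^{2n} log ‖x‖₂` (with value `0` at `x = 0`) is `2n−1` times
continuously differentiable on `ℝ^d` and its derivatives of order `2n−1` are
`γ`-Hölder continuous on every ball centered at the origin. -/
theorem thin_plate_spline_holder_regularity (d n : ℕ) (hn : 1 ≤ n)
    (γ : ℝ) (hγ0 : 0 < γ) (hγ1 : γ < 1) :
    ContDiff ℝ (2 * n - 1)
        (fun x : EuclideanSpace ℝ (Fin d) => ‖x‖ ^ (2 * n) * Real.log ‖x‖) ∧
      ∀ R : ℝ, 0 < R → ∃ L : ℝ,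
        ∀ u ∈ Metric.closedBall (0 : EuclideanSpace ℝ (Fin d)) R,
        ∀ v ∈ Metric.closedBall (0 : EuclideanSpace ℝ (Fin d)) R,
          ‖iteratedFDeriv ℝ (2 * n - 1)
              (fun x : EuclideanSpace ℝ (Fin d) => ‖x‖ ^ (2 * n) * Real.log ‖x‖) u -
            iteratedFDeriv ℝ (2 * n - 1)
              (fun x : EuclideanSpace ℝ (Fin d) => ‖x‖ ^ (2 * n) * Real.log ‖x‖) v‖ ≤
            L * ‖u - v‖ ^ γ := by
  classical
  set f := fun x : EuclideanSpace ℝ (Fin d) => ‖x‖ ^ (2 * n) * Real.log ‖x‖ with hfdef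
  set m := 2 * n - 1 with hm
  have hmsucc : m + 1 = 2 * n := by omega
  have hmcast : ((m : ℕ) : ℝ) = 2 * (n : ℝ) - 1 := by
    rw [hm]; push_cast [Nat.cast_sub (by omega : 1 ≤ 2 * n)]; ring
  have hf0 : f 0 = 0 := by
    simp [hfdef, zero_pow (by omega : 2 * n ≠ 0)]
  -- the C^{2n-1} part, via TPS.reg
  have hbnd1 : ∀ j : ℕ, j ≤ m → ∃ C : ℝ, ∀ x : EuclideanSpace ℝ (Fin d), x ≠ 0 → ‖x‖ ≤ 1 →
      ‖iteratedFDeriv ℝ j f x‖ ≤ C * ‖x‖ ^ ((m - j : ℝ) + (1/2 : ℝ)) := by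
    intro j hj
    obtain ⟨C, hC0, hC⟩ := TPS.deriv_bound (d := d) n hn j (1/2) 1 (by norm_num) le_rfl
    refine ⟨C, fun x hx hx1 => ?_⟩
    have h := hC x hx hx1
    have hexp : (2 * (n:ℝ)) - j - (1/2 : ℝ) = ((m - j : ℝ) + (1/2 : ℝ)) := by
      rw [hmcast]; ring
    rwa [hexp] at h
  obtain ⟨hcd, hval⟩ := TPS.reg (1/2 : ℝ) (by norm_num) m f hf0 (TPS.f_smooth n) hbnd1
  have hgoal1 : ContDiff ℝ (2 * (n : WithTop ℕ∞) - 1) f := by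
    have hcast : ((m : ℕ) : WithTop ℕ∞) = 2 * (n : WithTop ℕ∞) - 1 := by
      rw [hm]
      obtain ⟨k, rfl⟩ := Nat.exists_eq_add_of_le hn
      push_cast
      ring_nf
      rfl
    rwa [hcast] at hcd
  refine ⟨hgoal1, ?_⟩
  -- the Hölder part
  intro R hR
  set M := max R 1 with hMdef
  have hM1 : (1:ℝ) ≤ M := le_max_right R 1
  have hRM : R ≤ M := le_max_left R 1
  have hδ : (0:ℝ) < 1 - γ := by linarith
  obtain ⟨C1, hC10, hC1⟩ := TPS.deriv_bound (d := d) n hn m (1 - γ) M hδ hM1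
  obtain ⟨C2, hC20, hC2⟩ := TPS.deriv_bound (d := d) n hn (2 * n) (1 - γ) M hδ hM1
  have hexp1 : (2 * (n:ℝ)) - (m : ℝ) - (1 - γ) = γ := by rw [hmcast]; ring
  have hexp2 : (2 * (n:ℝ)) - ((2 * n : ℕ) : ℝ) - (1 - γ) = γ - 1 := by push_cast; ring
  rw [hexp1] at hC1
  rw [hexp2] at hC2
  set g := iteratedFDeriv ℝ m f with hgdef
  have hg0 : g 0 = 0 := hval m le_rfl
  have hgb : ∀ w : EuclideanSpace ℝ (Fin d), ‖w‖ ≤ M → ‖g w‖ ≤ C1 * ‖w‖ ^ γ := by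
    intro w hw
    by_cases hw0 : w = 0
    · subst hw0
      rw [hg0]
      simp [Real.zero_rpow hγ0.ne']
    · exact hC1 w hw0 hw
  refine ⟨4 * C1 + C2, ?_⟩
  have key : ∀ u v : EuclideanSpace ℝ (Fin d), ‖u‖ ≤ R → ‖v‖ ≤ R → ‖v‖ ≤ ‖u‖ →
      ‖g u - g v‖ ≤ (4 * C1 + C2) * ‖u - v‖ ^ γ := by
    intro u v hu hv hvu
    by_cases huv : u = v
    · simp [huv, Real.zero_rpow hγ0.ne']
    have hd0 : (0:ℝ) < ‖u - v‖ := norm_pos_iff.2 (sub_ne_zero.2 huv)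
    have hγrp : (0:ℝ) ≤ ‖u - v‖ ^ γ := Real.rpow_nonneg hd0.le γ
    rcases le_or_gt ‖u‖ (2 * ‖u - v‖) with hcase | hcase
    · -- far case
      have h1 : ‖g u‖ ≤ C1 * ‖u‖ ^ γ := hgb u (hu.trans hRM)
      have h2 : ‖g v‖ ≤ C1 * ‖v‖ ^ γ := hgb v (hv.trans hRM)
      have h3 : ‖v‖ ^ γ ≤ ‖u‖ ^ γ := Real.rpow_le_rpow (norm_nonneg v) hvu hγ0.le
      have h4 : ‖u‖ ^ γ ≤ (2 * ‖u - v‖) ^ γ :=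
        Real.rpow_le_rpow (norm_nonneg u) hcase hγ0.le
      have h5 : (2 * ‖u - v‖) ^ γ = 2 ^ γ * ‖u - v‖ ^ γ :=
        Real.mul_rpow (by norm_num) (norm_nonneg _)
      have h6 : (2:ℝ) ^ γ ≤ 2 := by
        calc (2:ℝ) ^ γ ≤ 2 ^ (1:ℝ) :=
              Real.rpow_le_rpow_of_exponent_le one_le_two hγ1.le
          _ = 2 := Real.rpow_one 2
      have h7 : ‖u‖ ^ γ ≤ 2 * ‖u - v‖ ^ γ := by
        calc ‖u‖ ^ γ ≤ (2 * ‖u - v‖) ^ γ := h4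
          _ = 2 ^ γ * ‖u - v‖ ^ γ := h5
          _ ≤ 2 * ‖u - v‖ ^ γ := mul_le_mul_of_nonneg_right h6 hγrp
      calc ‖g u - g v‖ ≤ ‖g u‖ + ‖g v‖ := norm_sub_le _ _
        _ ≤ C1 * ‖u‖ ^ γ + C1 * ‖v‖ ^ γ := add_le_add h1 h2
        _ ≤ C1 * ‖u‖ ^ γ + C1 * ‖u‖ ^ γ := by
            have := mul_le_mul_of_nonneg_left h3 hC10; linarith
        _ = 2 * C1 * ‖u‖ ^ γ := by ring
        _ ≤ 2 * C1 * (2 * ‖u - v‖ ^ γ) := by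
            have := mul_le_mul_of_nonneg_left h7 (by positivity : (0:ℝ) ≤ 2 * C1)
            linarith
        _ = 4 * C1 * ‖u - v‖ ^ γ := by ring
        _ ≤ (4 * C1 + C2) * ‖u - v‖ ^ γ := by nlinarith
    · -- near case: mean value inequality on the segment
      have hu0 : u ≠ 0 := by
        intro h
        rw [h, norm_zero] at hcase
        have := norm_nonneg ((0 : EuclideanSpace ℝ (Fin d)) - v)
        linarith
      have hupos : (0:ℝ) < ‖u‖ := norm_pos_iff.2 hu0
      set sset : Set (EuclideanSpace ℝ (Fin d)) := {(0 : EuclideanSpace ℝ (Fin d))}ᶜ with hssetdef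
      have hopen : IsOpen sset := isOpen_compl_singleton
      have hsu : UniqueDiffOn ℝ sset := hopen.uniqueDiffOn
      set seg := segment ℝ v u with hsegdef
      have hsegprop : ∀ w ∈ seg, ‖u‖ / 2 < ‖w‖ ∧ ‖w‖ ≤ M := by
        rintro w ⟨a, b, ha, hb, hab, rfl⟩
        constructor
        · have hb' : b = 1 - a := by linarith
          have ha1 : a ≤ 1 := by linarith
          have hw : u - (a • v + b • u) = a • (u - v) := by
            rw [hb']
            module
          have hnw : ‖u - (a • v + b • u)‖ = a * ‖u - v‖ := by
            rw [hw, norm_smul, Real.norm_eq_abs, abs_of_nonneg ha]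
          have h8 : ‖u‖ - ‖a • v + b • u‖ ≤ ‖u - (a • v + b • u)‖ := norm_sub_norm_le _ _
          have h9 : a * ‖u - v‖ ≤ ‖u - v‖ := by nlinarith
          linarith
        · have hmem : a • v + b • u ∈ Metric.closedBall (0 : EuclideanSpace ℝ (Fin d)) R := by
            apply (convex_closedBall (0 : EuclideanSpace ℝ (Fin d)) R).segment_subset
              (by simpa [Metric.mem_closedBall, dist_zero_right] using hv)
              (by simpa [Metric.mem_closedBall, dist_zero_right] using hu)
            exact ⟨a, b, ha, hb, hab, rfl⟩
          have : ‖a • v + b • u‖ ≤ R := by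
            simpa [Metric.mem_closedBall, dist_zero_right] using hmem
          linarith
      have hsegs : ∀ w ∈ seg, w ∈ sset := by
        intro w hw
        have := (hsegprop w hw).1
        have hwpos : (0:ℝ) < ‖w‖ := lt_of_le_of_lt (by positivity) this
        exact norm_pos_iff.1 hwpos
      set F' : EuclideanSpace ℝ (Fin d) →
          (EuclideanSpace ℝ (Fin d) →L[ℝ]
            ContinuousMultilinearMap ℝ (fun _ : Fin m => EuclideanSpace ℝ (Fin d)) ℝ) :=
        fun w => fderivWithin ℝ (iteratedFDerivWithin ℝ m f sset) sset w with hF'def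
      have hders : ∀ w ∈ seg, HasFDerivWithinAt g (F' w) seg w := by
        intro w hw
        have hws : w ∈ sset := hsegs w hw
        have hdw : DifferentiableWithinAt ℝ (iteratedFDerivWithin ℝ m f sset) sset w :=
          ((TPS.f_smooth n).differentiableOn_iteratedFDerivWithin
            (by exact_mod_cast (show ((m:ℕ):ℕ∞) < ⊤ from lt_top_iff_ne_top.2 (WithTop.natCast_ne_top m))) hsu) w hws
        have h1 : HasFDerivWithinAt (iteratedFDerivWithin ℝ m f sset) (F' w) sset w :=
          hdw.hasFDerivWithinAt
        have h2 : HasFDerivAt (iteratedFDerivWithin ℝ m f sset) (F' w) w :=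
          h1.hasFDerivAt (hopen.mem_nhds hws)
        have h3 : HasFDerivAt g (F' w) w := by
          apply h2.congr_of_eventuallyEq
          filter_upwards [hopen.mem_nhds hws] with z hz
          exact (iteratedFDerivWithin_of_isOpen m hopen hz).symm
        exact h3.hasFDerivWithinAt
      have hbound : ∀ w ∈ seg, ‖F' w‖ ≤ C2 * (‖u‖ / 2) ^ (γ - 1) := by
        intro w hw
        have hws : w ∈ sset := hsegs w hw
        obtain ⟨hwl, hwu⟩ := hsegprop w hw
        have hwpos : (0:ℝ) < ‖w‖ := lt_of_le_of_lt (by positivity) hwl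
        have h1 : ‖F' w‖ = ‖iteratedFDerivWithin ℝ (m + 1) f sset w‖ :=
          norm_fderivWithin_iteratedFDerivWithin
        have h2 : iteratedFDerivWithin ℝ (m + 1) f sset w = iteratedFDeriv ℝ (m + 1) f w :=
          iteratedFDerivWithin_of_isOpen (m + 1) hopen hws
        have h3 : ‖iteratedFDeriv ℝ (2 * n) f w‖ ≤ C2 * ‖w‖ ^ (γ - 1) :=
          hC2 w (norm_pos_iff.1 hwpos) hwu
        have h4 : ‖w‖ ^ (γ - 1) ≤ (‖u‖ / 2) ^ (γ - 1) :=
          Real.rpow_le_rpow_of_nonpos (by positivity) hwl.le (by linarith)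
        rw [h1, h2, hmsucc]
        calc ‖iteratedFDeriv ℝ (2 * n) f w‖ ≤ C2 * ‖w‖ ^ (γ - 1) := h3
          _ ≤ C2 * (‖u‖ / 2) ^ (γ - 1) := mul_le_mul_of_nonneg_left h4 hC20
      have hmvt : ‖g u - g v‖ ≤ C2 * (‖u‖ / 2) ^ (γ - 1) * ‖u - v‖ :=
        (convex_segment v u).norm_image_sub_le_of_norm_hasFDerivWithin_le hders hbound
          (left_mem_segment ℝ v u) (right_mem_segment ℝ v u)
      have hsplit : ‖u - v‖ = ‖u - v‖ ^ γ * ‖u - v‖ ^ (1 - γ) := by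
        rw [← Real.rpow_add hd0]
        norm_num
      have h5 : ‖u - v‖ ^ (1 - γ) ≤ (‖u‖ / 2) ^ (1 - γ) :=
        Real.rpow_le_rpow (norm_nonneg _) (by linarith) (by linarith)
      have h6 : (‖u‖ / 2) ^ (γ - 1) * (‖u‖ / 2) ^ (1 - γ) = 1 := by
        rw [← Real.rpow_add (by positivity)]
        norm_num
      have h7 : (0:ℝ) ≤ (‖u‖ / 2) ^ (γ - 1) := (Real.rpow_pos_of_pos (by positivity) _).le
      calc ‖g u - g v‖ ≤ C2 * (‖u‖ / 2) ^ (γ - 1) * ‖u - v‖ := hmvt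
        _ = C2 * (‖u‖ / 2) ^ (γ - 1) * (‖u - v‖ ^ γ * ‖u - v‖ ^ (1 - γ)) := by
            rw [← hsplit]
        _ ≤ C2 * (‖u‖ / 2) ^ (γ - 1) * (‖u - v‖ ^ γ * (‖u‖ / 2) ^ (1 - γ)) := by
            apply mul_le_mul_of_nonneg_left _ (by positivity)
            exact mul_le_mul_of_nonneg_left h5 (Real.rpow_nonneg hd0.le γ)
        _ = C2 * ((‖u‖ / 2) ^ (γ - 1) * (‖u‖ / 2) ^ (1 - γ)) * ‖u - v‖ ^ γ := by ring
        _ = C2 * ‖u - v‖ ^ γ := by rw [h6]; ring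
        _ ≤ (4 * C1 + C2) * ‖u - v‖ ^ γ := by nlinarith
  intro u hu v hv
  have hu' : ‖u‖ ≤ R := by simpa [Metric.mem_closedBall, dist_zero_right] using hu
  have hv' : ‖v‖ ≤ R := by simpa [Metric.mem_closedBall, dist_zero_right] using hv
  rcases le_total ‖v‖ ‖u‖ with hle | hle
  · exact key u v hu' hv' hle
  · rw [norm_sub_rev, ← neg_sub v u, norm_neg]
    exact key v u hv' hu' hle
end

section
/- Let X = {x₁,…,x_N} ⊂ ℝ^d, z ∈ ℝ^d, μ ≥ 0, and D a linear functional on polynomials. Then the growth function ρ(z,X,μ) := sup{ Dp : p ∈ Π_q^d, |p(x_j)| ≤ ‖x_j−z‖₂^μ for j = 1,…,N } equals inf{ Σ_{j=1}^N |w_j|·‖x_j−z‖₂^μ : w ∈ ℝ^N, Dp = Σ_{j=1}^N w_j p(x_j) for all p ∈ Π_q^d }, with the convention that both sides are +∞ when no exact weight vector exists. -/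
open scoped BigOperators

theorem aux_nofeas {M : Type*} [AddCommGroup M] [Module ℝ M] {n : ℕ}
    (V : Submodule ℝ M) (T : M →ₗ[ℝ] (Fin n → ℝ)) (D : M →ₗ[ℝ] ℝ)
    (h : ¬ ∃ w : Fin n → ℝ, ∀ p ∈ V, D p = ∑ j, w j * T p j) :
    ∃ p ∈ V, (∀ j, T p j = 0) ∧ D p ≠ 0 := by
  classical
  by_contra hcon
  push_neg at hcon
  apply h
  have hker : ⨅ j : Fin n, LinearMap.ker ((LinearMap.proj j ∘ₗ T).domRestrict V) ≤
      LinearMap.ker (D.domRestrict V) := by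
    intro p hp
    simp only [Submodule.mem_iInf, LinearMap.mem_ker, LinearMap.domRestrict_apply,
      LinearMap.comp_apply, LinearMap.proj_apply] at hp ⊢
    exact hcon p p.2 hp
  have hspan := mem_span_of_iInf_ker_le_ker hker
  obtain ⟨w, hw⟩ := (Submodule.mem_span_range_iff_exists_fun ℝ).1 hspan
  refine ⟨w, fun p hp => ?_⟩
  have := congrArg (fun f => f ⟨p, hp⟩) hw
  simp only [LinearMap.coe_sum, Finset.sum_apply, LinearMap.smul_apply,
    LinearMap.domRestrict_apply, LinearMap.comp_apply, LinearMap.proj_apply,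
    smul_eq_mul] at this
  exact this.symm

open scoped BigOperators NNReal

theorem aux_strong {M : Type*} [AddCommGroup M] [Module ℝ M] {n : ℕ}
    (V : Submodule ℝ M) (T : M →ₗ[ℝ] (Fin n → ℝ)) (D : M →ₗ[ℝ] ℝ)
    (c : Fin n → ℝ) (hc : ∀ j, 0 ≤ c j)
    (w₀ : Fin n → ℝ) (hw₀ : ∀ p ∈ V, D p = ∑ j, w₀ j * T p j) :
    ∃ w : Fin n → ℝ, (∀ p ∈ V, D p = ∑ j, w j * T p j) ∧
      ∑ j, |w j| * c j ≤ sSup {a : ℝ | ∃ p ∈ V, (∀ j, |T p j| ≤ c j) ∧ a = D p} := by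
  classical
  set A := {a : ℝ | ∃ p ∈ V, (∀ j, |T p j| ≤ c j) ∧ a = D p} with hA
  have hA0 : (0:ℝ) ∈ A := ⟨0, V.zero_mem, by simp [hc], by simp⟩
  have hAbdd : BddAbove A := by
    refine ⟨∑ j, |w₀ j| * c j, ?_⟩
    rintro a ⟨p, hpV, hpf, rfl⟩
    rw [hw₀ p hpV]
    refine Finset.sum_le_sum fun j _ => ?_
    calc w₀ j * T p j ≤ |w₀ j * T p j| := le_abs_self _
    _ = |w₀ j| * |T p j| := abs_mul _ _
    _ ≤ |w₀ j| * c j := mul_le_mul_of_nonneg_left (hpf j) (abs_nonneg _)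
  set ρ := sSup A with hρ
  have hρ0 : 0 ≤ ρ := le_csSup hAbdd hA0
  set m : (Fin n → ℝ) → ℝ≥0 := fun x =>
    Finset.univ.sup fun j => if c j = 0 then 0 else Real.toNNReal (|x j| / c j) with hm
  have hle : ∀ (x : Fin n → ℝ) (j : Fin n),
      (if c j = 0 then 0 else Real.toNNReal (|x j| / c j)) ≤ m x :=
    fun x j => Finset.le_sup (f := fun j => if c j = 0 then 0 else Real.toNNReal (|x j| / c j)) (Finset.mem_univ j)
  have hmc : ∀ (x : Fin n → ℝ) (j : Fin n), c j ≠ 0 → |x j| ≤ (m x : ℝ) * c j := by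
    intro x j hj
    have hcpos : 0 < c j := lt_of_le_of_ne (hc j) (Ne.symm hj)
    have h1 : Real.toNNReal (|x j| / c j) ≤ m x := by simpa [if_neg hj] using hle x j
    have h2 : |x j| / c j ≤ (m x : ℝ) := by
      have := NNReal.coe_le_coe.2 h1
      rwa [Real.coe_toNNReal _ (div_nonneg (abs_nonneg _) (hc j))] at this
    rwa [div_le_iff₀ hcpos] at h2
  have N_hom : ∀ t : ℝ, 0 < t → ∀ x, ρ * ((m (t • x) : ℝ≥0) : ℝ) = t * (ρ * ((m x : ℝ≥0) : ℝ)) := by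
    intro t ht x
    have : m (t • x) = Real.toNNReal t * m x := by
      rw [hm]
      simp only
      rw [NNReal.mul_finset_sup]
      refine Finset.sup_congr rfl fun j _ => ?_
      by_cases hj : c j = 0
      · simp [hj]
      · simp only [if_neg hj, Pi.smul_apply, smul_eq_mul, abs_mul, abs_of_pos ht,
          mul_div_assoc]
        rw [Real.toNNReal_mul ht.le]
    rw [this]
    push_cast
    rw [Real.coe_toNNReal _ ht.le]
    ring
  have N_add : ∀ x y, ρ * ((m (x + y) : ℝ≥0) : ℝ) ≤ ρ * ((m x : ℝ≥0) : ℝ) + ρ * ((m y : ℝ≥0) : ℝ) := by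
    intro x y
    have hmadd : m (x + y) ≤ m x + m y := by
      refine Finset.sup_le fun j _ => ?_
      by_cases hj : c j = 0
      · simp [hj]
      · have hcpos : 0 < c j := lt_of_le_of_ne (hc j) (Ne.symm hj)
        simp only [if_neg hj, Pi.add_apply]
        calc Real.toNNReal (|x j + y j| / c j)
            ≤ Real.toNNReal (|x j| / c j + |y j| / c j) := by
              refine Real.toNNReal_le_toNNReal ?_
              rw [← add_div]
              exact div_le_div_of_nonneg_right (abs_add_le _ _) hcpos.le
          _ ≤ Real.toNNReal (|x j| / c j) + Real.toNNReal (|y j| / c j) := Real.toNNReal_add_le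
          _ ≤ m x + m y := by
              exact add_le_add (by simpa [if_neg hj] using hle x j) (by simpa [if_neg hj] using hle y j)
    calc ρ * ((m (x + y) : ℝ≥0) : ℝ) ≤ ρ * ((m x + m y : ℝ≥0) : ℝ) := by
          refine mul_le_mul_of_nonneg_left ?_ hρ0
          exact_mod_cast hmadd
      _ = ρ * ((m x : ℝ≥0) : ℝ) + ρ * ((m y : ℝ≥0) : ℝ) := by push_cast; ring
  set φ : (Fin n → ℝ) →ₗ[ℝ] ℝ := ∑ j, w₀ j • (LinearMap.proj j : (Fin n → ℝ) →ₗ[ℝ] ℝ) with hφdef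
  have hφ : ∀ x, φ x = ∑ j, w₀ j * x j := by
    intro x
    simp [hφdef, LinearMap.sum_apply, LinearMap.smul_apply, LinearMap.proj_apply]
  set ES : Submodule ℝ (Fin n → ℝ) :=
    { carrier := {x | ∀ j, c j = 0 → x j = 0}
      add_mem' := fun hx hy j hj => by
        simp only [Pi.add_apply]
        rw [hx j hj, hy j hj, add_zero]
      zero_mem' := fun j _ => rfl
      smul_mem' := fun t x hx j hj => by
        simp only [Pi.smul_apply, smul_eq_mul]
        rw [hx j hj, mul_zero] } with hESdef
  have hES : ∀ x, x ∈ ES ↔ ∀ j, c j = 0 → x j = 0 := fun x => Iff.rfl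
  set W : Submodule ℝ (Fin n → ℝ) := Submodule.map T V ⊓ ES with hWdef
  set f : (Fin n → ℝ) →ₗ.[ℝ] ℝ := ⟨W, φ.domRestrict W⟩ with hfdef
  have hf : ∀ x : f.domain, f x ≤ ρ * ((m x : ℝ≥0) : ℝ) := by
    rintro ⟨x, hx⟩
    have hxES : x ∈ ES := hx.2
    obtain ⟨p, hpV, hTp⟩ := hx.1
    show φ x ≤ ρ * ((m x : ℝ≥0) : ℝ)
    by_cases hmx : m x = 0
    · have hx0 : x = 0 := by
        funext j
        by_cases hj : c j = 0
        · exact hxES j hj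
        · have h1 : Real.toNNReal (|x j| / c j) = 0 := by
            have := hle x j
            rw [if_neg hj, hmx, le_zero_iff] at this
            exact this
          have hcpos : 0 < c j := lt_of_le_of_ne (hc j) (Ne.symm hj)
          have h2 : |x j| / c j ≤ 0 := Real.toNNReal_eq_zero.1 h1
          rcases div_nonpos_iff.1 h2 with ⟨_, h4⟩ | ⟨h3, _⟩
          · exact absurd h4 (not_le.2 hcpos)
          · exact abs_nonpos_iff.1 h3
      have hφ0 : φ x = 0 := by rw [hx0, map_zero]
      rw [hφ0]
      exact mul_nonneg hρ0 (NNReal.coe_nonneg _)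
    · set t : ℝ := ((m x : ℝ≥0) : ℝ) with htdef
      have ht : 0 < t := NNReal.coe_pos.2 (pos_iff_ne_zero.2 hmx)
      have hfeas : ∀ j, |T (t⁻¹ • p) j| ≤ c j := by
        intro j
        rw [map_smul]
        simp only [Pi.smul_apply, smul_eq_mul, hTp, abs_mul, abs_of_pos (inv_pos.2 ht)]
        by_cases hj : c j = 0
        · rw [hxES j hj]
          simp [hc j]
        · rw [inv_mul_le_iff₀ ht]
          exact hmc x j hj
      have hmem : D (t⁻¹ • p) ∈ A := ⟨t⁻¹ • p, V.smul_mem _ hpV, hfeas, rfl⟩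
      have hle' : D (t⁻¹ • p) ≤ ρ := le_csSup hAbdd hmem
      have hφx : φ x = D p := by
        rw [hφ, hw₀ p hpV, ← hTp]
      have hDp : D p = t * D (t⁻¹ • p) := by
        rw [map_smul, smul_eq_mul, ← mul_assoc, mul_inv_cancel₀ ht.ne', one_mul]
      rw [hφx, hDp]
      calc t * D (t⁻¹ • p) ≤ t * ρ := mul_le_mul_of_nonneg_left hle' ht.le
        _ = ρ * t := mul_comm _ _
  obtain ⟨g, hg_eq, hg_le⟩ := exists_extension_of_le_sublinear f
    (fun x => ρ * ((m x : ℝ≥0) : ℝ)) N_hom N_add hf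
  set gj : Fin n → ℝ := fun i => g (fun j => if i = j then 1 else 0) with hgjdef
  have hgx : ∀ x, g x = ∑ i, x i * gj i := by
    intro x
    simpa [smul_eq_mul] using LinearMap.pi_apply_eq_sum_univ g x
  have hcost : (∑ j, if c j = 0 then (0:ℝ) else |gj j| * c j) ≤ ρ := by
    set xs : Fin n → ℝ := fun j => if c j = 0 then 0 else if 0 ≤ gj j then c j else -c j with hxs
    have h1 : g xs = ∑ j, (if c j = 0 then (0:ℝ) else |gj j| * c j) := by
      rw [hgx]
      refine Finset.sum_congr rfl fun j _ => ?_
      by_cases hj : c j = 0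
      · simp [hxs, hj]
      · simp only [hxs, if_neg hj]
        by_cases hgj : 0 ≤ gj j
        · rw [if_pos hgj, abs_of_nonneg hgj]; ring
        · rw [if_neg hgj, abs_of_neg (lt_of_not_ge hgj)]; ring
    have h2 : ((m xs : ℝ≥0) : ℝ) ≤ 1 := by
      have : m xs ≤ 1 := by
        refine Finset.sup_le fun j _ => ?_
        by_cases hj : c j = 0
        · simp [hj]
        · have hcpos : 0 < c j := lt_of_le_of_ne (hc j) (Ne.symm hj)
          rw [if_neg hj]
          have habs : |xs j| = c j := by
            simp only [hxs, if_neg hj]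
            by_cases hgj : 0 ≤ gj j
            · rw [if_pos hgj, abs_of_nonneg (hc j)]
            · rw [if_neg hgj, abs_neg, abs_of_nonneg (hc j)]
          rw [habs, div_self hj, Real.toNNReal_one]
      exact_mod_cast this
    calc (∑ j, if c j = 0 then (0:ℝ) else |gj j| * c j) = g xs := h1.symm
      _ ≤ ρ * ((m xs : ℝ≥0) : ℝ) := hg_le xs
      _ ≤ ρ * 1 := mul_le_mul_of_nonneg_left h2 hρ0
      _ = ρ := mul_one _
  set δ : ↥V →ₗ[ℝ] ℝ := D.domRestrict V -
    ∑ j ∈ Finset.univ.filter (fun j => ¬ c j = 0),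
      gj j • ((LinearMap.proj j ∘ₗ T).domRestrict V) with hδdef
  have hδker : ⨅ i : {j : Fin n // c j = 0},
      LinearMap.ker (((LinearMap.proj i.1 : (Fin n → ℝ) →ₗ[ℝ] ℝ) ∘ₗ T).domRestrict V) ≤
      LinearMap.ker δ := by
    intro p hp
    simp only [Submodule.mem_iInf, LinearMap.mem_ker, LinearMap.domRestrict_apply,
      LinearMap.comp_apply, LinearMap.proj_apply] at hp
    have hTes : (T p.1) ∈ ES := fun j hj => hp ⟨j, hj⟩
    have hTW : (T p.1) ∈ W := ⟨⟨p.1, p.2, rfl⟩, hTes⟩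
    have hgφ : g (T p.1) = φ (T p.1) := hg_eq ⟨T p.1, hTW⟩
    have hφD : φ (T p.1) = D p.1 := by rw [hφ]; exact (hw₀ p.1 p.2).symm
    have hsplit : g (T p.1) = ∑ j ∈ Finset.univ.filter (fun j => ¬ c j = 0), gj j * T p.1 j := by
      rw [hgx]
      rw [← Finset.sum_filter_add_sum_filter_not Finset.univ (fun j => c j = 0)]
      have hz : ∑ j ∈ Finset.univ.filter (fun j => c j = 0), T p.1 j * gj j = 0 := by
        refine Finset.sum_eq_zero fun j hj => ?_
        rw [hTes j (Finset.mem_filter.1 hj).2, zero_mul]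
      rw [hz, zero_add]
      exact Finset.sum_congr rfl fun j _ => mul_comm _ _
    simp only [LinearMap.mem_ker, hδdef, LinearMap.sub_apply, LinearMap.sum_apply,
      LinearMap.smul_apply, LinearMap.domRestrict_apply, LinearMap.comp_apply,
      LinearMap.proj_apply, smul_eq_mul]
    rw [← hsplit, hgφ, hφD, sub_self]
  have hspan := mem_span_of_iInf_ker_le_ker hδker
  obtain ⟨v, hv⟩ := (Submodule.mem_span_range_iff_exists_fun ℝ).1 hspan
  set w : Fin n → ℝ := fun j => if h : c j = 0 then v ⟨j, h⟩ else gj j with hwdef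
  refine ⟨w, ?_, ?_⟩
  · intro p hp
    have hδp := congrArg (fun f => f ⟨p, hp⟩) hv
    simp only [LinearMap.coe_sum, Finset.sum_apply, LinearMap.smul_apply,
      LinearMap.domRestrict_apply, LinearMap.comp_apply, LinearMap.proj_apply,
      smul_eq_mul, hδdef, LinearMap.sub_apply, LinearMap.sum_apply] at hδp
    -- hδp : ∑ i, v i * T p i.1 = D p - ∑ j in filter (¬ c = 0), gj j * T p j
    rw [← Finset.sum_filter_add_sum_filter_not Finset.univ (fun j => c j = 0)
      (fun j => w j * T p j)]
    have e1 : ∑ j ∈ Finset.univ.filter (fun j => c j = 0), w j * T p j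
        = ∑ i : {j : Fin n // c j = 0}, v i * T p i.1 := by
      rw [Finset.sum_subtype (p := fun j => c j = 0) (Finset.univ.filter (fun j => c j = 0))
        (fun j => by simp) (fun j => w j * T p j)]
      refine Finset.sum_congr rfl fun i _ => ?_
      rw [hwdef]
      simp only [dif_pos i.2]
    have e2 : ∑ j ∈ Finset.univ.filter (fun j => ¬ c j = 0), w j * T p j
        = ∑ j ∈ Finset.univ.filter (fun j => ¬ c j = 0), gj j * T p j := by
      refine Finset.sum_congr rfl fun j hj => ?_
      rw [hwdef]
      simp only [dif_neg (Finset.mem_filter.1 hj).2]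
    rw [e1, e2, hδp]
    ring
  · calc ∑ j, |w j| * c j = ∑ j, (if c j = 0 then (0:ℝ) else |gj j| * c j) := by
          refine Finset.sum_congr rfl fun j _ => ?_
          by_cases hj : c j = 0
          · rw [if_pos hj, hj, mul_zero]
          · rw [if_neg hj, hwdef]
            simp only [dif_neg hj]
      _ ≤ ρ := hcost

/-- LP duality for the growth function: for points `X = {x₁,…,x_N}`, a center `z`,
`μ ≥ 0` and a linear functional `D` on polynomials,
`sup { Dp : p ∈ Π_q^d, |p(x_j)| ≤ ‖x_j−z‖^μ } =
 inf { Σ_j |w_j|‖x_j−z‖^μ : Dp = Σ_j w_j p(x_j) for all p ∈ Π_q^d }`,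
both sides taken in `EReal` (so both are `+∞` when no exact weight vector exists). -/
theorem growth_function_duality (d N q : ℕ) (hq : 1 ≤ q)
    (X : Fin N → EuclideanSpace ℝ (Fin d)) (z : EuclideanSpace ℝ (Fin d))
    (μ : ℝ) (hμ : 0 ≤ μ)
    (D : MvPolynomial (Fin d) ℝ →ₗ[ℝ] ℝ) :
    sSup {t : EReal | ∃ p : MvPolynomial (Fin d) ℝ, p.totalDegree ≤ q - 1 ∧
        (∀ j : Fin N,
          |MvPolynomial.eval (fun i => X j i) p| ≤ ‖X j - z‖ ^ μ) ∧
        t = (D p : ℝ)} =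
      sInf {t : EReal | ∃ w : Fin N → ℝ,
        (∀ p : MvPolynomial (Fin d) ℝ, p.totalDegree ≤ q - 1 →
          D p = ∑ j, w j * MvPolynomial.eval (fun i => X j i) p) ∧
        t = ((∑ j, |w j| * ‖X j - z‖ ^ μ : ℝ) : EReal)} := by
  classical
  have hc : ∀ j : Fin N, (0:ℝ) ≤ ‖X j - z‖ ^ μ := fun j => Real.rpow_nonneg (norm_nonneg _) μ
  set V : Submodule ℝ (MvPolynomial (Fin d) ℝ) :=
    MvPolynomial.restrictTotalDegree (Fin d) ℝ (q - 1) with hVdef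
  have hV : ∀ p : MvPolynomial (Fin d) ℝ, p ∈ V ↔ p.totalDegree ≤ q - 1 := fun p =>
    MvPolynomial.mem_restrictTotalDegree (Fin d) (q - 1) p
  set T : MvPolynomial (Fin d) ℝ →ₗ[ℝ] (Fin N → ℝ) :=
    LinearMap.pi (fun j => (MvPolynomial.aeval (fun i => X j i)).toLinearMap) with hTdef
  have hT : ∀ (p : MvPolynomial (Fin d) ℝ) (j : Fin N),
      T p j = MvPolynomial.eval (fun i => X j i) p := by
    intro p j
    show (MvPolynomial.aeval (fun i => X j i)).toLinearMap p = _
    rw [AlgHom.toLinearMap_apply, ← MvPolynomial.coe_aeval_eq_eval]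
    rfl
  apply le_antisymm
  · refine sSup_le ?_
    rintro t ⟨p, hpd, hpf, rfl⟩
    refine le_sInf ?_
    rintro s ⟨w, hw, rfl⟩
    have key : D p ≤ ∑ j, |w j| * ‖X j - z‖ ^ μ := by
      rw [hw p hpd]
      refine Finset.sum_le_sum fun j _ => ?_
      calc w j * MvPolynomial.eval (fun i => X j i) p
          ≤ |w j * MvPolynomial.eval (fun i => X j i) p| := le_abs_self _
        _ = |w j| * |MvPolynomial.eval (fun i => X j i) p| := abs_mul _ _
        _ ≤ |w j| * ‖X j - z‖ ^ μ := mul_le_mul_of_nonneg_left (hpf j) (abs_nonneg _)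
    exact EReal.coe_le_coe_iff.2 key
  · by_cases hW : ∃ w : Fin N → ℝ, ∀ p : MvPolynomial (Fin d) ℝ, p.totalDegree ≤ q - 1 →
        D p = ∑ j, w j * MvPolynomial.eval (fun i => X j i) p
    · -- weights exist : strong duality
      obtain ⟨w₀, hw₀⟩ := hW
      have hw₀' : ∀ p ∈ V, D p = ∑ j, w₀ j * T p j := by
        intro p hp
        rw [hw₀ p ((hV p).1 hp)]
        exact Finset.sum_congr rfl fun j _ => by rw [hT]
      obtain ⟨w, hwex, hwcost⟩ := aux_strong V T D (fun j => ‖X j - z‖ ^ μ) hc w₀ hw₀'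
      have hS2mem : ((∑ j, |w j| * ‖X j - z‖ ^ μ : ℝ) : EReal) ∈
          {t : EReal | ∃ w : Fin N → ℝ,
            (∀ p : MvPolynomial (Fin d) ℝ, p.totalDegree ≤ q - 1 →
              D p = ∑ j, w j * MvPolynomial.eval (fun i => X j i) p) ∧
            t = ((∑ j, |w j| * ‖X j - z‖ ^ μ : ℝ) : EReal)} := by
        refine ⟨w, fun p hp => ?_, rfl⟩
        rw [hwex p ((hV p).2 hp)]
        exact Finset.sum_congr rfl fun j _ => by rw [hT]
      refine le_trans (sInf_le hS2mem) ?_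
      refine le_trans (EReal.coe_le_coe_iff.2 hwcost) ?_
      rw [le_sSup_iff]
      intro b hb
      have h0mem : ((0:ℝ) : EReal) ∈ {t : EReal | ∃ p : MvPolynomial (Fin d) ℝ,
          p.totalDegree ≤ q - 1 ∧ (∀ j : Fin N,
            |MvPolynomial.eval (fun i => X j i) p| ≤ ‖X j - z‖ ^ μ) ∧ t = (D p : ℝ)} := by
        refine ⟨0, by simp, fun j => by simpa using hc j, by simp⟩
      induction b with
      | bot =>
        have := hb h0mem
        simp at this
      | coe r =>
        have hAle : ∀ a ∈ {a : ℝ | ∃ p ∈ V, (∀ j, |T p j| ≤ ‖X j - z‖ ^ μ) ∧ a = D p}, a ≤ r := by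
          rintro a ⟨p, hpV, hpf, rfl⟩
          have : ((D p : ℝ) : EReal) ≤ ((r : ℝ) : EReal) :=
            hb ⟨p, (hV p).1 hpV, fun j => by rw [← hT]; exact hpf j, rfl⟩
          exact_mod_cast this
        have hA0 : (0:ℝ) ∈ {a : ℝ | ∃ p ∈ V, (∀ j, |T p j| ≤ ‖X j - z‖ ^ μ) ∧ a = D p} :=
          ⟨0, V.zero_mem, fun j => by simpa [map_zero] using hc j, by simp⟩
        exact EReal.coe_le_coe_iff.2 (csSup_le ⟨0, hA0⟩ hAle)
      | top => exact le_top
    · -- no weights : both sides are ⊤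
      have hempty : {t : EReal | ∃ w : Fin N → ℝ,
          (∀ p : MvPolynomial (Fin d) ℝ, p.totalDegree ≤ q - 1 →
            D p = ∑ j, w j * MvPolynomial.eval (fun i => X j i) p) ∧
          t = ((∑ j, |w j| * ‖X j - z‖ ^ μ : ℝ) : EReal)} = ∅ := by
        rw [Set.eq_empty_iff_forall_notMem]
        rintro t ⟨w, hw, _⟩
        exact hW ⟨w, hw⟩
      have hW' : ¬ ∃ w : Fin N → ℝ, ∀ p ∈ V, D p = ∑ j, w j * T p j := by
        rintro ⟨w, hw⟩
        refine hW ⟨w, fun p hp => ?_⟩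
        rw [hw p ((hV p).2 hp)]
        exact Finset.sum_congr rfl fun j _ => by rw [hT]
      obtain ⟨p₀, hp₀V, hp₀T, hp₀D⟩ := aux_nofeas V T D hW'
      obtain ⟨p₁, hp₁V, hp₁T, hp₁D⟩ : ∃ p₁ ∈ V, (∀ j, T p₁ j = 0) ∧ 0 < D p₁ := by
        rcases lt_or_gt_of_ne hp₀D with h | h
        · refine ⟨-p₀, V.neg_mem hp₀V, fun j => ?_, ?_⟩
          · rw [map_neg]
            simp [hp₀T j]
          · rw [map_neg]
            linarith
        · exact ⟨p₀, hp₀V, hp₀T, h⟩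
      have hsup : sSup {t : EReal | ∃ p : MvPolynomial (Fin d) ℝ,
          p.totalDegree ≤ q - 1 ∧ (∀ j : Fin N,
            |MvPolynomial.eval (fun i => X j i) p| ≤ ‖X j - z‖ ^ μ) ∧ t = (D p : ℝ)} = ⊤ := by
        rw [sSup_eq_top]
        intro b hb
        obtain ⟨r, hbr, -⟩ := EReal.exists_between_coe_real hb
        set s : ℝ := (|r| + 1) / D p₁ with hs
        refine ⟨((D (s • p₁) : ℝ) : EReal), ⟨s • p₁, ?_, ?_, rfl⟩, ?_⟩
        · exact (hV _).1 (V.smul_mem s hp₁V)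
        · intro j
          rw [← hT]
          rw [map_smul]
          simp only [Pi.smul_apply, smul_eq_mul, hp₁T j, mul_zero, abs_zero]
          exact hc j
        · have hDs : D (s • p₁) = |r| + 1 := by
            rw [map_smul, smul_eq_mul, hs, div_mul_cancel₀ _ hp₁D.ne']
          rw [hDs]
          refine lt_trans hbr ?_
          exact_mod_cast lt_of_le_of_lt (le_abs_self r) (lt_add_one _)
      rw [hempty, hsup, sInf_empty]
end
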